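/- arXiv:1310.0268 — 9 statements merged into one kernel-verified Lean document; each statement's English description precedes it below -/
import Mathlib

section
/- Let N ≥ 1, let u_j, v_j : ℝ×ℝ → ℝ (j = 1,…,N) be smooth functions of (x,t), set m_j = u_j − ∂_x²u_j and n_j = v_j − ∂_x²v_j, and let H : ℝ×ℝ → ℝ be a smooth function. Then the CH(N,H) system holds identically on ℝ×ℝ if and only if for every real λ ≠ 0 the zero-curvature equation ∂_t U(λ) − ∂_x V(λ) + U(λ)V(λ) − V(λ)U(λ) = 0 holds identically on ℝ×ℝ, where U(λ), V(λ) are the (N+1)×(N+1) matrix-valued functions of the Lax pair. -/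
noncomputable section

/-- Partial derivative in the first (spatial) variable. -/
def pdx (f : ℝ → ℝ → ℝ) : ℝ → ℝ → ℝ := fun x t => deriv (fun y => f y t) x

/-- Partial derivative in the second (time) variable. -/
def pdt (f : ℝ → ℝ → ℝ) : ℝ → ℝ → ℝ := fun x t => deriv (fun s => f x s) t

/-- The CH(N,H) multi-component system. -/
def chSys (N : ℕ) (u v m n : Fin N → ℝ → ℝ → ℝ) (H : ℝ → ℝ → ℝ) : Prop :=
  ∀ j : Fin N, ∀ x t : ℝ,
    (pdt (m j) x t =
      pdx (fun x t => m j x t * H x t) x t + m j x t * H x t +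
        (1 / ((N : ℝ) + 1) ^ 2) *
          ∑ i : Fin N,
            (m i x t * (u j x t - pdx (u j) x t) * (v i x t + pdx (v i) x t) +
             m j x t * (u i x t - pdx (u i) x t) * (v i x t + pdx (v i) x t)))
    ∧
    (pdt (n j) x t =
      pdx (fun x t => n j x t * H x t) x t - n j x t * H x t -
        (1 / ((N : ℝ) + 1) ^ 2) *
          ∑ i : Fin N,
            (n i x t * (u i x t - pdx (u i) x t) * (v j x t + pdx (v j) x t) +
             n j x t * (u i x t - pdx (u i) x t) * (v i x t + pdx (v i) x t)))

/-- The spatial Lax matrix U(λ). -/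
def laxU (N : ℕ) (m n : Fin N → ℝ → ℝ → ℝ) (lam : ℝ) (x t : ℝ) :
    Matrix (Fin (N + 1)) (Fin (N + 1)) ℝ :=
  Matrix.of fun i j =>
    (1 / ((N : ℝ) + 1)) *
      (if hi : i = 0 then
        (if hj : j = 0 then -(N : ℝ) else lam * m (j.pred hj) x t)
      else
        (if hj : j = 0 then lam * n (i.pred hi) x t
         else if i.pred hi = j.pred hj then 1 else 0))

/-- The temporal Lax matrix V(λ). -/
def laxV (N : ℕ) (u v m n : Fin N → ℝ → ℝ → ℝ) (H : ℝ → ℝ → ℝ) (lam : ℝ) (x t : ℝ) :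
    Matrix (Fin (N + 1)) (Fin (N + 1)) ℝ :=
  Matrix.of fun i j =>
    (1 / ((N : ℝ) + 1)) *
      (if hi : i = 0 then
        (if hj : j = 0 then
          -(N : ℝ) * lam⁻¹ ^ 2 +
            (1 / ((N : ℝ) + 1)) *
              ∑ i' : Fin N, (u i' x t - pdx (u i') x t) * (v i' x t + pdx (v i') x t)
        else
          lam⁻¹ * (u (j.pred hj) x t - pdx (u (j.pred hj)) x t) +
            lam * m (j.pred hj) x t * H x t)
      else
        (if hj : j = 0 then
          lam⁻¹ * (v (i.pred hi) x t + pdx (v (i.pred hi)) x t) +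
            lam * n (i.pred hi) x t * H x t
        else
          (if i.pred hi = j.pred hj then lam⁻¹ ^ 2 else 0) -
            (1 / ((N : ℝ) + 1)) * (v (i.pred hi) x t + pdx (v (i.pred hi)) x t) *
              (u (j.pred hj) x t - pdx (u (j.pred hj)) x t)))

private lemma sliceX {f : ℝ → ℝ → ℝ} (hf : ContDiff ℝ (⊤ : ℕ∞) (Function.uncurry f)) (x t : ℝ) :
    HasDerivAt (fun y => f y t) (pdx f x t) x := by
  have h : DifferentiableAt ℝ (fun y => f y t) x := by
    have h2 : (fun y => f y t) = (Function.uncurry f) ∘ (fun y => (y, t)) := rfl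
    rw [h2]
    exact ((hf.differentiable (by simp)).comp
      ((differentiable_id).prodMk (differentiable_const t))).differentiableAt
  exact h.hasDerivAt

private lemma sliceT {f : ℝ → ℝ → ℝ} (hf : ContDiff ℝ (⊤ : ℕ∞) (Function.uncurry f)) (x t : ℝ) :
    HasDerivAt (fun s => f x s) (pdt f x t) t := by
  have h : DifferentiableAt ℝ (fun s => f x s) t := by
    have h2 : (fun s => f x s) = (Function.uncurry f) ∘ (fun s => (x, s)) := rfl
    rw [h2]
    exact ((hf.differentiable (by simp)).comp
      ((differentiable_const x).prodMk differentiable_id)).differentiableAt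
  exact h.hasDerivAt

private lemma contDiff_pdx' {f : ℝ → ℝ → ℝ} (hf : ContDiff ℝ (⊤ : ℕ∞) (Function.uncurry f)) :
    ContDiff ℝ (⊤ : ℕ∞) (Function.uncurry (pdx f)) := by
  have h : Function.uncurry (pdx f) =
      fun p : ℝ × ℝ => fderiv ℝ (Function.uncurry f) p (1, 0) := by
    funext p
    obtain ⟨x, t⟩ := p
    have hF : HasFDerivAt (Function.uncurry f) (fderiv ℝ (Function.uncurry f) (x, t)) (x, t) :=
      (hf.differentiable (by simp) (x, t)).hasFDerivAt
    have hline : HasDerivAt (fun y : ℝ => ((y, t) : ℝ × ℝ)) (1, 0) x :=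
      HasDerivAt.prodMk (hasDerivAt_id x) (hasDerivAt_const x t)
    exact (hF.comp_hasDerivAt x hline).deriv
  rw [h]
  exact (ContinuousLinearMap.apply ℝ ℝ ((1:ℝ), (0:ℝ))).contDiff.comp (hf.fderiv_right (by simp))

/-- Residual of the first CH equation. -/
def resid1 (N : ℕ) (u v m : Fin N → ℝ → ℝ → ℝ) (H : ℝ → ℝ → ℝ) (j : Fin N) (x t : ℝ) : ℝ :=
  pdt (m j) x t -
    (pdx (fun x t => m j x t * H x t) x t + m j x t * H x t +
      (1 / ((N : ℝ) + 1) ^ 2) *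
        ∑ i : Fin N,
          (m i x t * (u j x t - pdx (u j) x t) * (v i x t + pdx (v i) x t) +
           m j x t * (u i x t - pdx (u i) x t) * (v i x t + pdx (v i) x t)))

/-- Residual of the second CH equation. -/
def resid2 (N : ℕ) (u v n : Fin N → ℝ → ℝ → ℝ) (H : ℝ → ℝ → ℝ) (j : Fin N) (x t : ℝ) : ℝ :=
  pdt (n j) x t -
    (pdx (fun x t => n j x t * H x t) x t - n j x t * H x t -
      (1 / ((N : ℝ) + 1) ^ 2) *
        ∑ i : Fin N,
          (n i x t * (u i x t - pdx (u i) x t) * (v j x t + pdx (v j) x t) +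
           n j x t * (u i x t - pdx (u i) x t) * (v i x t + pdx (v i) x t)))

set_option maxHeartbeats 1000000 in
private lemma keyEntry (N : ℕ)
    (u v m n : Fin N → ℝ → ℝ → ℝ) (H : ℝ → ℝ → ℝ)
    (hu : ∀ j, ContDiff ℝ (⊤ : ℕ∞) (Function.uncurry (u j)))
    (hv : ∀ j, ContDiff ℝ (⊤ : ℕ∞) (Function.uncurry (v j)))
    (hH : ContDiff ℝ (⊤ : ℕ∞) (Function.uncurry H))
    (hm : ∀ j, m j = fun x t => u j x t - pdx (pdx (u j)) x t)
    (hn : ∀ j, n j = fun x t => v j x t - pdx (pdx (v j)) x t)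
    (lam : ℝ) (hlam : lam ≠ 0) (x t : ℝ) (i k : Fin (N + 1)) :
    pdt (fun x t => laxU N m n lam x t i k) x t
      - pdx (fun x t => laxV N u v m n H lam x t i k) x t
      + (laxU N m n lam x t * laxV N u v m n H lam x t) i k
      - (laxV N u v m n H lam x t * laxU N m n lam x t) i k =
    (if hi : i = 0 then
      (if hk : k = 0 then 0
       else (1 / ((N : ℝ) + 1)) * lam * resid1 N u v m H (k.pred hk) x t)
     else
      (if hk : k = 0 then (1 / ((N : ℝ) + 1)) * lam * resid2 N u v n H (i.pred hi) x t
       else 0)) := by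
  have hc : ((N : ℝ) + 1) ≠ 0 := by positivity
  have hsm : ∀ j, ContDiff ℝ (⊤ : ℕ∞) (Function.uncurry (m j)) := fun j => by
    rw [hm j]; exact (hu j).sub (contDiff_pdx' (contDiff_pdx' (hu j)))
  have hsn : ∀ j, ContDiff ℝ (⊤ : ℕ∞) (Function.uncurry (n j)) := fun j => by
    rw [hn j]; exact (hv j).sub (contDiff_pdx' (contDiff_pdx' (hv j)))
  have hP : ∀ i : Fin N, HasDerivAt (fun y => u i y t - pdx (u i) y t)
      (pdx (u i) x t - pdx (pdx (u i)) x t) x :=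
    fun i => (sliceX (hu i) x t).sub (sliceX (contDiff_pdx' (hu i)) x t)
  have hQ : ∀ i : Fin N, HasDerivAt (fun y => v i y t + pdx (v i) y t)
      (pdx (v i) x t + pdx (pdx (v i)) x t) x :=
    fun i => (sliceX (hv i) x t).add (sliceX (contDiff_pdx' (hv i)) x t)
  have hMH : ∀ j : Fin N, pdx (fun x t => m j x t * H x t) x t =
      pdx (m j) x t * H x t + m j x t * pdx H x t :=
    fun j => ((sliceX (hsm j) x t).mul (sliceX hH x t)).deriv
  have hNH : ∀ j : Fin N, pdx (fun x t => n j x t * H x t) x t =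
      pdx (n j) x t * H x t + n j x t * pdx H x t :=
    fun j => ((sliceX (hsn j) x t).mul (sliceX hH x t)).deriv
  have hmv : ∀ i : Fin N, m i x t = u i x t - pdx (pdx (u i)) x t :=
    fun i => congrFun (congrFun (hm i) x) t
  have hnv : ∀ i : Fin N, n i x t = v i x t - pdx (pdx (v i)) x t :=
    fun i => congrFun (congrFun (hn i) x) t
  induction i using Fin.cases with
  | zero =>
    induction k using Fin.cases with
    | zero =>
      simp only [laxU, laxV, Matrix.mul_apply, Matrix.of_apply, Fin.sum_univ_succ,
        dif_pos, Fin.succ_ne_zero, dif_neg, ne_eq, Fin.pred_succ, dite_true, dite_false,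
        not_false_eq_true, eq_self_iff_true]
      have d0 : pdt (fun x t => 1 / ((N:ℝ) + 1) * -(N:ℝ)) x t = 0 := deriv_const _ _
      have d1 : pdx
          (fun x t =>
            1 / ((N:ℝ) + 1) *
              (-(N:ℝ) * lam⁻¹ ^ 2 +
                1 / ((N:ℝ) + 1) * ∑ i' : Fin N, (u i' x t - pdx (u i') x t) * (v i' x t + pdx (v i') x t)))
          x t = _ :=
        HasDerivAt.deriv
          ((((HasDerivAt.fun_sum (fun i _ => (hP i).mul (hQ i))).const_mul
            (1 / ((N:ℝ) + 1))).const_add (-(N:ℝ) * lam⁻¹ ^ 2)).const_mul (1 / ((N:ℝ) + 1)))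
      rw [d0, d1]
      have h : (∑ i : Fin N, 1 / ((N:ℝ) + 1) * (lam * m i x t) *
            (1 / ((N:ℝ) + 1) * (lam⁻¹ * (v i x t + pdx (v i) x t) + lam * n i x t * H x t)))
          - (∑ i : Fin N, 1 / ((N:ℝ) + 1) * (lam⁻¹ * (u i x t - pdx (u i) x t) + lam * m i x t * H x t) *
            (1 / ((N:ℝ) + 1) * (lam * n i x t)))
          - 1 / ((N:ℝ) + 1) * (1 / ((N:ℝ) + 1) *
            ∑ i : Fin N,
              ((pdx (u i) x t - pdx (pdx (u i)) x t) * (v i x t + pdx (v i) x t) +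
                (u i x t - pdx (u i) x t) * (pdx (v i) x t + pdx (pdx (v i)) x t))) = 0 := by
        rw [Finset.mul_sum, Finset.mul_sum, ← Finset.sum_sub_distrib, ← Finset.sum_sub_distrib]
        refine Finset.sum_eq_zero fun i _ => ?_
        rw [hmv i, hnv i]
        field_simp
        ring
      linear_combination h
    | succ j =>
      simp only [laxU, laxV, Matrix.mul_apply, Matrix.of_apply, Fin.sum_univ_succ,
        dif_pos, Fin.succ_ne_zero, dif_neg, ne_eq, Fin.pred_succ, dite_true, dite_false,
        not_false_eq_true, eq_self_iff_true]
      have d0 : pdt (fun x t => 1 / ((N:ℝ) + 1) * (lam * m j x t)) x t = _ :=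
        HasDerivAt.deriv (((sliceT (hsm j) x t).const_mul lam).const_mul (1 / ((N:ℝ) + 1)))
      have d1 : pdx (fun x t => 1 / ((N:ℝ) + 1) *
            (lam⁻¹ * (u j x t - pdx (u j) x t) + lam * m j x t * H x t)) x t = _ :=
        HasDerivAt.deriv ((((hP j).const_mul lam⁻¹).add
          (((sliceX (hsm j) x t).const_mul lam).mul (sliceX hH x t))).const_mul (1 / ((N:ℝ) + 1)))
      rw [d0, d1, resid1, hMH j]
      simp only [mul_ite, ite_mul, mul_one, one_mul, mul_zero, zero_mul, mul_sub, sub_mul,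
        Finset.sum_sub_distrib, Finset.sum_ite_eq, Finset.sum_ite_eq', Finset.mem_univ, if_true]
      have eA1 : (∑ x_1 : Fin N, 1 / ((N:ℝ) + 1) * (lam * m x_1 x t) *
            (1 / ((N:ℝ) + 1) * (1 / ((N:ℝ) + 1) * (v x_1 x t + pdx (v x_1) x t) * u j x t))) =
          1 / ((N:ℝ) + 1) * (1 / ((N:ℝ) + 1)) * (1 / ((N:ℝ) + 1)) * lam * u j x t *
            ∑ i : Fin N, m i x t * (v i x t + pdx (v i) x t) := by
        rw [Finset.mul_sum]; exact Finset.sum_congr rfl fun i _ => by ring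
      have eA2 : (∑ x_1 : Fin N, 1 / ((N:ℝ) + 1) * (lam * m x_1 x t) *
            (1 / ((N:ℝ) + 1) * (1 / ((N:ℝ) + 1) * (v x_1 x t + pdx (v x_1) x t) * pdx (u j) x t))) =
          1 / ((N:ℝ) + 1) * (1 / ((N:ℝ) + 1)) * (1 / ((N:ℝ) + 1)) * lam * pdx (u j) x t *
            ∑ i : Fin N, m i x t * (v i x t + pdx (v i) x t) := by
        rw [Finset.mul_sum]; exact Finset.sum_congr rfl fun i _ => by ring
      have eR : (∑ x_1 : Fin N,
            (m x_1 x t * u j x t * (v x_1 x t + pdx (v x_1) x t) -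
                m x_1 x t * pdx (u j) x t * (v x_1 x t + pdx (v x_1) x t) +
              (m j x t * u x_1 x t * (v x_1 x t + pdx (v x_1) x t) -
                m j x t * pdx (u x_1) x t * (v x_1 x t + pdx (v x_1) x t)))) =
          u j x t * (∑ i : Fin N, m i x t * (v i x t + pdx (v i) x t)) -
            pdx (u j) x t * (∑ i : Fin N, m i x t * (v i x t + pdx (v i) x t)) +
            (m j x t * ∑ x_1 : Fin N, u x_1 x t * (v x_1 x t + pdx (v x_1) x t) -
              m j x t * ∑ x_1 : Fin N, pdx (u x_1) x t * (v x_1 x t + pdx (v x_1) x t)) := by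
        rw [Finset.mul_sum, Finset.mul_sum, Finset.mul_sum, Finset.mul_sum,
          ← Finset.sum_sub_distrib, ← Finset.sum_sub_distrib, ← Finset.sum_add_distrib]
        exact Finset.sum_congr rfl fun i _ => by ring
      rw [eA1, eA2, eR, hmv j]
      field_simp
      ring
  | succ j =>
    induction k using Fin.cases with
    | zero =>
      simp only [laxU, laxV, Matrix.mul_apply, Matrix.of_apply, Fin.sum_univ_succ,
        dif_pos, Fin.succ_ne_zero, dif_neg, ne_eq, Fin.pred_succ, dite_true, dite_false,
        not_false_eq_true, eq_self_iff_true]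
      have d0 : pdt (fun x t => 1 / ((N:ℝ) + 1) * (lam * n j x t)) x t = _ :=
        HasDerivAt.deriv (((sliceT (hsn j) x t).const_mul lam).const_mul (1 / ((N:ℝ) + 1)))
      have d1 : pdx (fun x t => 1 / ((N:ℝ) + 1) *
            (lam⁻¹ * (v j x t + pdx (v j) x t) + lam * n j x t * H x t)) x t = _ :=
        HasDerivAt.deriv ((((hQ j).const_mul lam⁻¹).add
          (((sliceX (hsn j) x t).const_mul lam).mul (sliceX hH x t))).const_mul (1 / ((N:ℝ) + 1)))
      rw [d0, d1, resid2, hNH j]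
      simp only [mul_ite, ite_mul, mul_one, one_mul, mul_zero, zero_mul, mul_sub, sub_mul,
        Finset.sum_sub_distrib, Finset.sum_ite_eq, Finset.sum_ite_eq', Finset.mem_univ, if_true]
      have eC1 : (∑ x_1 : Fin N, 1 / ((N:ℝ) + 1) * (1 / ((N:ℝ) + 1) * (v j x t + pdx (v j) x t) * u x_1 x t) *
            (1 / ((N:ℝ) + 1) * (lam * n x_1 x t))) =
          1 / ((N:ℝ) + 1) * (1 / ((N:ℝ) + 1)) * (1 / ((N:ℝ) + 1)) * lam * (v j x t + pdx (v j) x t) *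
            ∑ i : Fin N, u i x t * n i x t := by
        rw [Finset.mul_sum]; exact Finset.sum_congr rfl fun i _ => by ring
      have eC2 : (∑ x_1 : Fin N, 1 / ((N:ℝ) + 1) * (1 / ((N:ℝ) + 1) * (v j x t + pdx (v j) x t) * pdx (u x_1) x t) *
            (1 / ((N:ℝ) + 1) * (lam * n x_1 x t))) =
          1 / ((N:ℝ) + 1) * (1 / ((N:ℝ) + 1)) * (1 / ((N:ℝ) + 1)) * lam * (v j x t + pdx (v j) x t) *
            ∑ i : Fin N, pdx (u i) x t * n i x t := by
        rw [Finset.mul_sum]; exact Finset.sum_congr rfl fun i _ => by ring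
      have eR2 : (∑ x_1 : Fin N,
            (n x_1 x t * u x_1 x t * (v j x t + pdx (v j) x t) -
                n x_1 x t * pdx (u x_1) x t * (v j x t + pdx (v j) x t) +
              (n j x t * u x_1 x t * (v x_1 x t + pdx (v x_1) x t) -
                n j x t * pdx (u x_1) x t * (v x_1 x t + pdx (v x_1) x t)))) =
          (v j x t + pdx (v j) x t) * (∑ i : Fin N, u i x t * n i x t) -
            (v j x t + pdx (v j) x t) * (∑ i : Fin N, pdx (u i) x t * n i x t) +
            (n j x t * ∑ x_1 : Fin N, u x_1 x t * (v x_1 x t + pdx (v x_1) x t) -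
              n j x t * ∑ x_1 : Fin N, pdx (u x_1) x t * (v x_1 x t + pdx (v x_1) x t)) := by
        rw [Finset.mul_sum, Finset.mul_sum, Finset.mul_sum, Finset.mul_sum,
          ← Finset.sum_sub_distrib, ← Finset.sum_sub_distrib, ← Finset.sum_add_distrib]
        exact Finset.sum_congr rfl fun i _ => by ring
      rw [eC1, eC2, eR2, hnv j]
      field_simp
      ring
    | succ k =>
      simp only [laxU, laxV, Matrix.mul_apply, Matrix.of_apply, Fin.sum_univ_succ,
        dif_pos, Fin.succ_ne_zero, dif_neg, ne_eq, Fin.pred_succ, dite_true, dite_false,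
        not_false_eq_true, eq_self_iff_true]
      have d0 : pdt (fun x t => 1 / ((N:ℝ) + 1) * if j = k then (1:ℝ) else 0) x t = 0 :=
        deriv_const _ _
      have d1 : pdx (fun x t => 1 / ((N:ℝ) + 1) *
            ((if j = k then lam⁻¹ ^ 2 else 0) -
              1 / ((N:ℝ) + 1) * (v j x t + pdx (v j) x t) * (u k x t - pdx (u k) x t))) x t = _ :=
        HasDerivAt.deriv (((hasDerivAt_const x (if j = k then lam⁻¹ ^ 2 else 0)).sub
          (((hQ j).const_mul (1 / ((N:ℝ) + 1))).mul (hP k))).const_mul (1 / ((N:ℝ) + 1)))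
      rw [d0, d1]
      simp only [mul_ite, ite_mul, mul_one, one_mul, mul_zero, zero_mul, mul_sub, sub_mul,
        Finset.sum_sub_distrib, Finset.sum_ite_eq, Finset.sum_ite_eq', Finset.mem_univ, if_true]
      rw [hmv k, hnv j]
      by_cases hjk : j = k
      · simp only [if_pos hjk]
        field_simp
        ring
      · simp only [if_neg hjk]
        field_simp
        ring

/-- the CH(N,H) system holds identically iff the zero-curvature equation
`∂ₜU − ∂ₓV + UV − VU = 0` holds identically for every nonzero spectral parameter λ. -/
theorem chSys_iff_zeroCurvature (N : ℕ) (hN : 1 ≤ N)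
    (u v m n : Fin N → ℝ → ℝ → ℝ) (H : ℝ → ℝ → ℝ)
    (hu : ∀ j, ContDiff ℝ (⊤ : ℕ∞) (Function.uncurry (u j)))
    (hv : ∀ j, ContDiff ℝ (⊤ : ℕ∞) (Function.uncurry (v j)))
    (hH : ContDiff ℝ (⊤ : ℕ∞) (Function.uncurry H))
    (hm : ∀ j, m j = fun x t => u j x t - pdx (pdx (u j)) x t)
    (hn : ∀ j, n j = fun x t => v j x t - pdx (pdx (v j)) x t) :
    chSys N u v m n H ↔
      ∀ lam : ℝ, lam ≠ 0 → ∀ x t : ℝ,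
        (Matrix.of fun i j => pdt (fun x t => laxU N m n lam x t i j) x t)
          - (Matrix.of fun i j => pdx (fun x t => laxV N u v m n H lam x t i j) x t)
          + laxU N m n lam x t * laxV N u v m n H lam x t
          - laxV N u v m n H lam x t * laxU N m n lam x t = 0 := by
  constructor
  · intro hch lam hlam x t
    ext i k
    simp only [Matrix.sub_apply, Matrix.add_apply, Matrix.of_apply, Matrix.zero_apply]
    rw [keyEntry N u v m n H hu hv hH hm hn lam hlam x t i k]
    by_cases hi : i = 0
    · rw [dif_pos hi]
      by_cases hk : k = 0
      · rw [dif_pos hk]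
      · rw [dif_neg hk]
        have hz : resid1 N u v m H (k.pred hk) x t = 0 := by
          unfold resid1
          rw [(hch (k.pred hk) x t).1]
          ring
        rw [hz, mul_zero]
    · rw [dif_neg hi]
      by_cases hk : k = 0
      · rw [dif_pos hk]
        have hz : resid2 N u v n H (i.pred hi) x t = 0 := by
          unfold resid2
          rw [(hch (i.pred hi) x t).2]
          ring
        rw [hz, mul_zero]
      · rw [dif_neg hk]
  · intro hzc j x t
    have hc1 : (1 / ((N:ℝ) + 1)) * 1 ≠ 0 := by positivity
    constructor
    · have h : ((Matrix.of fun i k => pdt (fun x t => laxU N m n 1 x t i k) x t)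
          - (Matrix.of fun i k => pdx (fun x t => laxV N u v m n H 1 x t i k) x t)
          + laxU N m n 1 x t * laxV N u v m n H 1 x t
          - laxV N u v m n H 1 x t * laxU N m n 1 x t) 0 j.succ
            = (0 : Matrix (Fin (N+1)) (Fin (N+1)) ℝ) 0 j.succ := by
        rw [hzc 1 one_ne_zero x t]
      simp only [Matrix.sub_apply, Matrix.add_apply, Matrix.of_apply, Matrix.zero_apply] at h
      rw [keyEntry N u v m n H hu hv hH hm hn 1 one_ne_zero x t 0 j.succ,
        dif_pos rfl, dif_neg (Fin.succ_ne_zero j)] at h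
      simp only [Fin.pred_succ] at h
      have h2 : resid1 N u v m H j x t = 0 := (mul_eq_zero.mp h).resolve_left hc1
      unfold resid1 at h2
      linarith
    · have h : ((Matrix.of fun i k => pdt (fun x t => laxU N m n 1 x t i k) x t)
          - (Matrix.of fun i k => pdx (fun x t => laxV N u v m n H 1 x t i k) x t)
          + laxU N m n 1 x t * laxV N u v m n H 1 x t
          - laxV N u v m n H 1 x t * laxU N m n 1 x t) j.succ 0
            = (0 : Matrix (Fin (N+1)) (Fin (N+1)) ℝ) j.succ 0 := by
        rw [hzc 1 one_ne_zero x t]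
      simp only [Matrix.sub_apply, Matrix.add_apply, Matrix.of_apply, Matrix.zero_apply] at h
      rw [keyEntry N u v m n H hu hv hH hm hn 1 one_ne_zero x t j.succ 0,
        dif_neg (Fin.succ_ne_zero j), dif_pos rfl] at h
      simp only [Fin.pred_succ] at h
      have h2 : resid2 N u v n H j x t = 0 := (mul_eq_zero.mp h).resolve_left hc1
      unfold resid2 at h2
      linarith
end
end

section
/- Let u_1, u_2, v_1, v_2 : ℝ×ℝ → ℝ be smooth, set m_j = u_j − ∂_x²u_j and n_j = v_j − ∂_x²v_j (j = 1,2), and let H : ℝ×ℝ → ℝ be smooth. Then the four-component system CH(2,H) holds identically if and only if for every real λ ≠ 0 the zero-curvature equation ∂_t U(λ) − ∂_x V(λ) + U(λ)V(λ) − V(λ)U(λ) = 0 holds identically, where U(λ) = (1/3)[[−2, λm_1, λm_2],[λn_1, 1, 0],[λn_2, 0, 1]] and V(λ) = (1/3)[[V₁₁, V₁₂, V₁₃],[V₂₁, V₂₂, V₂₃],[V₃₁, V₃₂, V₃₃]] with V₁₁ = −2λ^{−2} + (1/3)[(u_1−u_{1,x})(v_1+v_{1,x}) + (u_2−u_{2,x})(v_2+v_{2,x})],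 V₁₂ = λ^{−1}(u_1−u_{1,x}) + λm_1H, V₁₃ = λ^{−1}(u_2−u_{2,x}) + λm_2H, V₂₁ = λ^{−1}(v_1+v_{1,x}) + λn_1H, V₂₂ = λ^{−2} − (1/3)(u_1−u_{1,x})(v_1+v_{1,x}), V₂₃ = −(1/3)(u_2−u_{2,x})(v_1+v_{1,x}), V₃₁ = λ^{−1}(v_2+v_{2,x}) + λn_2H, V₃₂ = −(1/3)(u_1−u_{1,x})(v_2+v_{2,x}), V₃₃ = λ^{−2} − (1/3)(u_2−u_{2,x})(v_2+v_{2,x}). -/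
noncomputable section

/-- The four-component system CH(2,H). -/
def chSys2 (u₁ u₂ v₁ v₂ m₁ m₂ n₁ n₂ : ℝ → ℝ → ℝ) (H : ℝ → ℝ → ℝ) : Prop :=
  ∀ x t : ℝ,
    (pdt m₁ x t = pdx (fun x t => m₁ x t * H x t) x t + m₁ x t * H x t +
      (1 / 9) * (m₁ x t * (2 * (u₁ x t - pdx u₁ x t) * (v₁ x t + pdx v₁ x t) +
            (u₂ x t - pdx u₂ x t) * (v₂ x t + pdx v₂ x t)) +
          m₂ x t * (u₁ x t - pdx u₁ x t) * (v₂ x t + pdx v₂ x t)))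
    ∧
    (pdt m₂ x t = pdx (fun x t => m₂ x t * H x t) x t + m₂ x t * H x t +
      (1 / 9) * (m₁ x t * (u₂ x t - pdx u₂ x t) * (v₁ x t + pdx v₁ x t) +
          m₂ x t * ((u₁ x t - pdx u₁ x t) * (v₁ x t + pdx v₁ x t) +
            2 * (u₂ x t - pdx u₂ x t) * (v₂ x t + pdx v₂ x t))))
    ∧
    (pdt n₁ x t = pdx (fun x t => n₁ x t * H x t) x t - n₁ x t * H x t -
      (1 / 9) * (n₁ x t * (2 * (u₁ x t - pdx u₁ x t) * (v₁ x t + pdx v₁ x t) +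
            (u₂ x t - pdx u₂ x t) * (v₂ x t + pdx v₂ x t)) +
          n₂ x t * (u₂ x t - pdx u₂ x t) * (v₁ x t + pdx v₁ x t)))
    ∧
    (pdt n₂ x t = pdx (fun x t => n₂ x t * H x t) x t - n₂ x t * H x t -
      (1 / 9) * (n₁ x t * (u₁ x t - pdx u₁ x t) * (v₂ x t + pdx v₂ x t) +
          n₂ x t * ((u₁ x t - pdx u₁ x t) * (v₁ x t + pdx v₁ x t) +
            2 * (u₂ x t - pdx u₂ x t) * (v₂ x t + pdx v₂ x t))))

/-- The 3×3 spatial Lax matrix U(λ) for CH(2,H). -/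
def laxU2 (m₁ m₂ n₁ n₂ : ℝ → ℝ → ℝ) (lam : ℝ) (x t : ℝ) : Matrix (Fin 3) (Fin 3) ℝ :=
  (1 / 3 : ℝ) • !![-2, lam * m₁ x t, lam * m₂ x t;
                   lam * n₁ x t, 1, 0;
                   lam * n₂ x t, 0, 1]

/-- The 3×3 temporal Lax matrix V(λ) for CH(2,H). -/
def laxV2 (u₁ u₂ v₁ v₂ m₁ m₂ n₁ n₂ : ℝ → ℝ → ℝ) (H : ℝ → ℝ → ℝ) (lam : ℝ) (x t : ℝ) :
    Matrix (Fin 3) (Fin 3) ℝ :=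
  (1 / 3 : ℝ) •
    !![-2 * lam⁻¹ ^ 2 + (1 / 3) * ((u₁ x t - pdx u₁ x t) * (v₁ x t + pdx v₁ x t) +
          (u₂ x t - pdx u₂ x t) * (v₂ x t + pdx v₂ x t)),
        lam⁻¹ * (u₁ x t - pdx u₁ x t) + lam * m₁ x t * H x t,
        lam⁻¹ * (u₂ x t - pdx u₂ x t) + lam * m₂ x t * H x t;
        lam⁻¹ * (v₁ x t + pdx v₁ x t) + lam * n₁ x t * H x t,
        lam⁻¹ ^ 2 - (1 / 3) * (u₁ x t - pdx u₁ x t) * (v₁ x t + pdx v₁ x t),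
        -(1 / 3) * (u₂ x t - pdx u₂ x t) * (v₁ x t + pdx v₁ x t);
        lam⁻¹ * (v₂ x t + pdx v₂ x t) + lam * n₂ x t * H x t,
        -(1 / 3) * (u₁ x t - pdx u₁ x t) * (v₂ x t + pdx v₂ x t),
        lam⁻¹ ^ 2 - (1 / 3) * (u₂ x t - pdx u₂ x t) * (v₂ x t + pdx v₂ x t)]

private theorem slice_contDiff {f : ℝ → ℝ → ℝ} (hf : ContDiff ℝ (⊤ : ℕ∞) (Function.uncurry f)) (t : ℝ) :
    ContDiff ℝ ((⊤ : ℕ∞) : WithTop ℕ∞) (fun y => f y t) := by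
  exact (hf.of_le (by simp)).comp (contDiff_id.prodMk contDiff_const)

private theorem deriv_cd {g : ℝ → ℝ} (hg : ContDiff ℝ ((⊤ : ℕ∞) : WithTop ℕ∞) g) :
    ContDiff ℝ ((⊤ : ℕ∞) : WithTop ℕ∞) (deriv g) := (contDiff_infty_iff_deriv.mp hg).2

private theorem fin3_two (h : 2 < 3) : (⟨2, h⟩ : Fin 3) = 2 := rfl

set_option maxHeartbeats 2000000 in
theorem zcEval (u₁ u₂ v₁ v₂ m₁ m₂ n₁ n₂ : ℝ → ℝ → ℝ) (H : ℝ → ℝ → ℝ)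
    (hu₁ : ContDiff ℝ (⊤ : ℕ∞) (Function.uncurry u₁)) (hu₂ : ContDiff ℝ (⊤ : ℕ∞) (Function.uncurry u₂))
    (hv₁ : ContDiff ℝ (⊤ : ℕ∞) (Function.uncurry v₁)) (hv₂ : ContDiff ℝ (⊤ : ℕ∞) (Function.uncurry v₂))
    (hH : ContDiff ℝ (⊤ : ℕ∞) (Function.uncurry H))
    (hm₁ : m₁ = fun x t => u₁ x t - pdx (pdx u₁) x t)
    (hm₂ : m₂ = fun x t => u₂ x t - pdx (pdx u₂) x t)
    (hn₁ : n₁ = fun x t => v₁ x t - pdx (pdx v₁) x t)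
    (hn₂ : n₂ = fun x t => v₂ x t - pdx (pdx v₂) x t)
    (lam : ℝ) (hlam : lam ≠ 0) (x t : ℝ) :
    (Matrix.of fun i j => pdt (fun x t => laxU2 m₁ m₂ n₁ n₂ lam x t i j) x t)
      - (Matrix.of fun i j =>
          pdx (fun x t => laxV2 u₁ u₂ v₁ v₂ m₁ m₂ n₁ n₂ H lam x t i j) x t)
      + laxU2 m₁ m₂ n₁ n₂ lam x t * laxV2 u₁ u₂ v₁ v₂ m₁ m₂ n₁ n₂ H lam x t
      - laxV2 u₁ u₂ v₁ v₂ m₁ m₂ n₁ n₂ H lam x t * laxU2 m₁ m₂ n₁ n₂ lam x t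
    = (lam / 3) • !![0,
        pdt m₁ x t - (pdx (fun x t => m₁ x t * H x t) x t + m₁ x t * H x t +
          (1 / 9) * (m₁ x t * (2 * (u₁ x t - pdx u₁ x t) * (v₁ x t + pdx v₁ x t) +
                (u₂ x t - pdx u₂ x t) * (v₂ x t + pdx v₂ x t)) +
              m₂ x t * (u₁ x t - pdx u₁ x t) * (v₂ x t + pdx v₂ x t))),
        pdt m₂ x t - (pdx (fun x t => m₂ x t * H x t) x t + m₂ x t * H x t +
          (1 / 9) * (m₁ x t * (u₂ x t - pdx u₂ x t) * (v₁ x t + pdx v₁ x t) +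
              m₂ x t * ((u₁ x t - pdx u₁ x t) * (v₁ x t + pdx v₁ x t) +
                2 * (u₂ x t - pdx u₂ x t) * (v₂ x t + pdx v₂ x t))));
        pdt n₁ x t - (pdx (fun x t => n₁ x t * H x t) x t - n₁ x t * H x t -
          (1 / 9) * (n₁ x t * (2 * (u₁ x t - pdx u₁ x t) * (v₁ x t + pdx v₁ x t) +
                (u₂ x t - pdx u₂ x t) * (v₂ x t + pdx v₂ x t)) +
              n₂ x t * (u₂ x t - pdx u₂ x t) * (v₁ x t + pdx v₁ x t))), 0, 0;
        pdt n₂ x t - (pdx (fun x t => n₂ x t * H x t) x t - n₂ x t * H x t -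
          (1 / 9) * (n₁ x t * (u₁ x t - pdx u₁ x t) * (v₂ x t + pdx v₂ x t) +
              n₂ x t * ((u₁ x t - pdx u₁ x t) * (v₁ x t + pdx v₁ x t) +
                2 * (u₂ x t - pdx u₂ x t) * (v₂ x t + pdx v₂ x t)))), 0, 0] := by
  subst hm₁ hm₂ hn₁ hn₂
  have cu₁ := slice_contDiff hu₁ t
  have cu₂ := slice_contDiff hu₂ t
  have cv₁ := slice_contDiff hv₁ t
  have cv₂ := slice_contDiff hv₂ t
  have cH := slice_contDiff hH t
  have du₁0 : DifferentiableAt ℝ (fun y => u₁ y t) x := (cu₁.differentiable (by simp)).differentiableAt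
  have du₁1 : DifferentiableAt ℝ (fun y => pdx u₁ y t) x := ((deriv_cd cu₁).differentiable (by simp)).differentiableAt
  have du₁2 : DifferentiableAt ℝ (fun y => pdx (pdx u₁) y t) x := ((deriv_cd (deriv_cd cu₁)).differentiable (by simp)).differentiableAt
  have du₂0 : DifferentiableAt ℝ (fun y => u₂ y t) x := (cu₂.differentiable (by simp)).differentiableAt
  have du₂1 : DifferentiableAt ℝ (fun y => pdx u₂ y t) x := ((deriv_cd cu₂).differentiable (by simp)).differentiableAt
  have du₂2 : DifferentiableAt ℝ (fun y => pdx (pdx u₂) y t) x := ((deriv_cd (deriv_cd cu₂)).differentiable (by simp)).differentiableAt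
  have dv₁0 : DifferentiableAt ℝ (fun y => v₁ y t) x := (cv₁.differentiable (by simp)).differentiableAt
  have dv₁1 : DifferentiableAt ℝ (fun y => pdx v₁ y t) x := ((deriv_cd cv₁).differentiable (by simp)).differentiableAt
  have dv₁2 : DifferentiableAt ℝ (fun y => pdx (pdx v₁) y t) x := ((deriv_cd (deriv_cd cv₁)).differentiable (by simp)).differentiableAt
  have dv₂0 : DifferentiableAt ℝ (fun y => v₂ y t) x := (cv₂.differentiable (by simp)).differentiableAt
  have dv₂1 : DifferentiableAt ℝ (fun y => pdx v₂ y t) x := ((deriv_cd cv₂).differentiable (by simp)).differentiableAt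
  have dv₂2 : DifferentiableAt ℝ (fun y => pdx (pdx v₂) y t) x := ((deriv_cd (deriv_cd cv₂)).differentiable (by simp)).differentiableAt
  have dH0 : DifferentiableAt ℝ (fun y => H y t) x := (cH.differentiable (by simp)).differentiableAt
  have hu₁0 : HasDerivAt (fun y => u₁ y t) (pdx u₁ x t) x := du₁0.hasDerivAt
  have hu₁1 : HasDerivAt (fun y => pdx u₁ y t) (pdx (pdx u₁) x t) x := du₁1.hasDerivAt
  have hu₂0 : HasDerivAt (fun y => u₂ y t) (pdx u₂ x t) x := du₂0.hasDerivAt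
  have hu₂1 : HasDerivAt (fun y => pdx u₂ y t) (pdx (pdx u₂) x t) x := du₂1.hasDerivAt
  have hv₁0 : HasDerivAt (fun y => v₁ y t) (pdx v₁ x t) x := dv₁0.hasDerivAt
  have hv₁1 : HasDerivAt (fun y => pdx v₁ y t) (pdx (pdx v₁) x t) x := dv₁1.hasDerivAt
  have hv₂0 : HasDerivAt (fun y => v₂ y t) (pdx v₂ x t) x := dv₂0.hasDerivAt
  have hv₂1 : HasDerivAt (fun y => pdx v₂ y t) (pdx (pdx v₂) x t) x := dv₂1.hasDerivAt
  have hMH1 : HasDerivAt (fun y => (u₁ y t - pdx (pdx u₁) y t) * H y t) (pdx (fun x t => (u₁ x t - pdx (pdx u₁) x t) * H x t) x t) x := ((du₁0.sub du₁2).mul dH0).hasDerivAt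
  have hNH1 : HasDerivAt (fun y => (v₁ y t - pdx (pdx v₁) y t) * H y t) (pdx (fun x t => (v₁ x t - pdx (pdx v₁) x t) * H x t) x t) x := ((dv₁0.sub dv₁2).mul dH0).hasDerivAt
  have hMH2 : HasDerivAt (fun y => (u₂ y t - pdx (pdx u₂) y t) * H y t) (pdx (fun x t => (u₂ x t - pdx (pdx u₂) x t) * H x t) x t) x := ((du₂0.sub du₂2).mul dH0).hasDerivAt
  have hNH2 : HasDerivAt (fun y => (v₂ y t - pdx (pdx v₂) y t) * H y t) (pdx (fun x t => (v₂ x t - pdx (pdx v₂) x t) * H x t) x t) x := ((dv₂0.sub dv₂2).mul dH0).hasDerivAt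
  have hptc1 : pdt (fun _ _ : ℝ => (1:ℝ) / 3 * -2) x t = 0 := deriv_const _ _
  have hptc2 : pdt (fun _ _ : ℝ => (1:ℝ) / 3 * 1) x t = 0 := deriv_const _ _
  have hptc3 : pdt (fun _ _ : ℝ => (1:ℝ) / 3 * 0) x t = 0 := deriv_const _ _
  have hptu₁ : pdt (fun x t => 1 / 3 * (lam * (u₁ x t - pdx (pdx u₁) x t))) x t
      = 1 / 3 * (lam * pdt (fun x t => u₁ x t - pdx (pdx u₁) x t) x t) := by
    show deriv (fun s => 1 / 3 * (lam * (u₁ x s - pdx (pdx u₁) x s))) t = _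
    rw [deriv_const_mul_field, deriv_const_mul_field]
    rfl
  have hptu₂ : pdt (fun x t => 1 / 3 * (lam * (u₂ x t - pdx (pdx u₂) x t))) x t
      = 1 / 3 * (lam * pdt (fun x t => u₂ x t - pdx (pdx u₂) x t) x t) := by
    show deriv (fun s => 1 / 3 * (lam * (u₂ x s - pdx (pdx u₂) x s))) t = _
    rw [deriv_const_mul_field, deriv_const_mul_field]
    rfl
  have hptv₁ : pdt (fun x t => 1 / 3 * (lam * (v₁ x t - pdx (pdx v₁) x t))) x t
      = 1 / 3 * (lam * pdt (fun x t => v₁ x t - pdx (pdx v₁) x t) x t) := by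
    show deriv (fun s => 1 / 3 * (lam * (v₁ x s - pdx (pdx v₁) x s))) t = _
    rw [deriv_const_mul_field, deriv_const_mul_field]
    rfl
  have hptv₂ : pdt (fun x t => 1 / 3 * (lam * (v₂ x t - pdx (pdx v₂) x t))) x t
      = 1 / 3 * (lam * pdt (fun x t => v₂ x t - pdx (pdx v₂) x t) x t) := by
    show deriv (fun s => 1 / 3 * (lam * (v₂ x s - pdx (pdx v₂) x s))) t = _
    rw [deriv_const_mul_field, deriv_const_mul_field]
    rfl
  have hA : pdx (fun x t =>
        1 / 3 * (-2 * lam⁻¹ ^ 2 + 1 / 3 * ((u₁ x t - pdx u₁ x t) * (v₁ x t + pdx v₁ x t) + (u₂ x t - pdx u₂ x t) * (v₂ x t + pdx v₂ x t)))) x t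
      = 1 / 3 * (1 / 3 * (((pdx u₁ x t - pdx (pdx u₁) x t) * (v₁ x t + pdx v₁ x t) + (u₁ x t - pdx u₁ x t) * (pdx v₁ x t + pdx (pdx v₁) x t)) + ((pdx u₂ x t - pdx (pdx u₂) x t) * (v₂ x t + pdx v₂ x t) + (u₂ x t - pdx u₂ x t) * (pdx v₂ x t + pdx (pdx v₂) x t)))) := by
    refine (((((hu₁0.sub hu₁1).mul (hv₁0.add hv₁1)).add ((hu₂0.sub hu₂1).mul (hv₂0.add hv₂1))).const_mul
      ((1:ℝ)/3)).const_add (-2 * lam⁻¹ ^ 2) |>.const_mul ((1:ℝ)/3)).deriv.trans ?_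
    simp only [Pi.add_apply, Pi.sub_apply]
  have hB1 : pdx (fun x t => 1 / 3 * (lam⁻¹ * (u₁ x t - pdx u₁ x t) + lam * (u₁ x t - pdx (pdx u₁) x t) * H x t)) x t
      = 1 / 3 * (lam⁻¹ * (pdx u₁ x t - pdx (pdx u₁) x t) + lam * (pdx (fun x t => (u₁ x t - pdx (pdx u₁) x t) * H x t) x t)) := by
    rw [show (fun x t => 1 / 3 * (lam⁻¹ * (u₁ x t - pdx u₁ x t) + lam * (u₁ x t - pdx (pdx u₁) x t) * H x t))
        = (fun x t => 1 / 3 * (lam⁻¹ * (u₁ x t - pdx u₁ x t) + lam * ((u₁ x t - pdx (pdx u₁) x t) * H x t))) from by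
      funext a b; ring]
    refine ((((hu₁0.sub hu₁1).const_mul lam⁻¹).add (hMH1.const_mul lam)).const_mul ((1:ℝ)/3)).deriv.trans ?_
    ring
  have hB2 : pdx (fun x t => 1 / 3 * (lam⁻¹ * (u₂ x t - pdx u₂ x t) + lam * (u₂ x t - pdx (pdx u₂) x t) * H x t)) x t
      = 1 / 3 * (lam⁻¹ * (pdx u₂ x t - pdx (pdx u₂) x t) + lam * (pdx (fun x t => (u₂ x t - pdx (pdx u₂) x t) * H x t) x t)) := by
    rw [show (fun x t => 1 / 3 * (lam⁻¹ * (u₂ x t - pdx u₂ x t) + lam * (u₂ x t - pdx (pdx u₂) x t) * H x t))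
        = (fun x t => 1 / 3 * (lam⁻¹ * (u₂ x t - pdx u₂ x t) + lam * ((u₂ x t - pdx (pdx u₂) x t) * H x t))) from by
      funext a b; ring]
    refine ((((hu₂0.sub hu₂1).const_mul lam⁻¹).add (hMH2.const_mul lam)).const_mul ((1:ℝ)/3)).deriv.trans ?_
    ring
  have hK1 : pdx (fun x t => 1 / 3 * (lam⁻¹ * (v₁ x t + pdx v₁ x t) + lam * (v₁ x t - pdx (pdx v₁) x t) * H x t)) x t
      = 1 / 3 * (lam⁻¹ * (pdx v₁ x t + pdx (pdx v₁) x t) + lam * (pdx (fun x t => (v₁ x t - pdx (pdx v₁) x t) * H x t) x t)) := by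
    rw [show (fun x t => 1 / 3 * (lam⁻¹ * (v₁ x t + pdx v₁ x t) + lam * (v₁ x t - pdx (pdx v₁) x t) * H x t))
        = (fun x t => 1 / 3 * (lam⁻¹ * (v₁ x t + pdx v₁ x t) + lam * ((v₁ x t - pdx (pdx v₁) x t) * H x t))) from by
      funext a b; ring]
    refine ((((hv₁0.add hv₁1).const_mul lam⁻¹).add (hNH1.const_mul lam)).const_mul ((1:ℝ)/3)).deriv.trans ?_
    ring
  have hK2 : pdx (fun x t => 1 / 3 * (lam⁻¹ * (v₂ x t + pdx v₂ x t) + lam * (v₂ x t - pdx (pdx v₂) x t) * H x t)) x t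
      = 1 / 3 * (lam⁻¹ * (pdx v₂ x t + pdx (pdx v₂) x t) + lam * (pdx (fun x t => (v₂ x t - pdx (pdx v₂) x t) * H x t) x t)) := by
    rw [show (fun x t => 1 / 3 * (lam⁻¹ * (v₂ x t + pdx v₂ x t) + lam * (v₂ x t - pdx (pdx v₂) x t) * H x t))
        = (fun x t => 1 / 3 * (lam⁻¹ * (v₂ x t + pdx v₂ x t) + lam * ((v₂ x t - pdx (pdx v₂) x t) * H x t))) from by
      funext a b; ring]
    refine ((((hv₂0.add hv₂1).const_mul lam⁻¹).add (hNH2.const_mul lam)).const_mul ((1:ℝ)/3)).deriv.trans ?_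
    ring
  have hD1 : pdx (fun x t => 1 / 3 * (lam⁻¹ ^ 2 - 1 / 3 * (u₁ x t - pdx u₁ x t) * (v₁ x t + pdx v₁ x t))) x t
      = 1 / 3 * (-(1 / 3) * ((pdx u₁ x t - pdx (pdx u₁) x t) * (v₁ x t + pdx v₁ x t) + (u₁ x t - pdx u₁ x t) * (pdx v₁ x t + pdx (pdx v₁) x t))) := by
    rw [show (fun x t => 1 / 3 * (lam⁻¹ ^ 2 - 1 / 3 * (u₁ x t - pdx u₁ x t) * (v₁ x t + pdx v₁ x t)))
        = (fun x t => 1 / 3 * (lam⁻¹ ^ 2 - 1 / 3 * ((u₁ x t - pdx u₁ x t) * (v₁ x t + pdx v₁ x t)))) from by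
      funext a b; ring]
    refine (((((hu₁0.sub hu₁1).mul (hv₁0.add hv₁1)).const_mul ((1:ℝ)/3)).const_sub (lam⁻¹ ^ 2)).const_mul ((1:ℝ)/3)).deriv.trans ?_
    simp only [Pi.add_apply, Pi.sub_apply]
    ring
  have hD2 : pdx (fun x t => 1 / 3 * (lam⁻¹ ^ 2 - 1 / 3 * (u₂ x t - pdx u₂ x t) * (v₂ x t + pdx v₂ x t))) x t
      = 1 / 3 * (-(1 / 3) * ((pdx u₂ x t - pdx (pdx u₂) x t) * (v₂ x t + pdx v₂ x t) + (u₂ x t - pdx u₂ x t) * (pdx v₂ x t + pdx (pdx v₂) x t))) := by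
    rw [show (fun x t => 1 / 3 * (lam⁻¹ ^ 2 - 1 / 3 * (u₂ x t - pdx u₂ x t) * (v₂ x t + pdx v₂ x t)))
        = (fun x t => 1 / 3 * (lam⁻¹ ^ 2 - 1 / 3 * ((u₂ x t - pdx u₂ x t) * (v₂ x t + pdx v₂ x t)))) from by
      funext a b; ring]
    refine (((((hu₂0.sub hu₂1).mul (hv₂0.add hv₂1)).const_mul ((1:ℝ)/3)).const_sub (lam⁻¹ ^ 2)).const_mul ((1:ℝ)/3)).deriv.trans ?_
    simp only [Pi.add_apply, Pi.sub_apply]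
    ring
  have hO12 : pdx (fun x t => 1 / 3 * (-(1 / 3) * (u₂ x t - pdx u₂ x t) * (v₁ x t + pdx v₁ x t))) x t
      = 1 / 3 * (-(1 / 3) * ((pdx u₂ x t - pdx (pdx u₂) x t) * (v₁ x t + pdx v₁ x t) + (u₂ x t - pdx u₂ x t) * (pdx v₁ x t + pdx (pdx v₁) x t))) := by
    rw [show (fun x t => 1 / 3 * (-(1 / 3) * (u₂ x t - pdx u₂ x t) * (v₁ x t + pdx v₁ x t)))
        = (fun x t => 1 / 3 * (-(1 / 3) * ((u₂ x t - pdx u₂ x t) * (v₁ x t + pdx v₁ x t)))) from by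
      funext a b; ring]
    refine ((((hu₂0.sub hu₂1).mul (hv₁0.add hv₁1)).const_mul ((-(1/3) : ℝ))).const_mul ((1:ℝ)/3)).deriv.trans ?_
    simp only [Pi.add_apply, Pi.sub_apply]
  have hO21 : pdx (fun x t => 1 / 3 * (-(1 / 3) * (u₁ x t - pdx u₁ x t) * (v₂ x t + pdx v₂ x t))) x t
      = 1 / 3 * (-(1 / 3) * ((pdx u₁ x t - pdx (pdx u₁) x t) * (v₂ x t + pdx v₂ x t) + (u₁ x t - pdx u₁ x t) * (pdx v₂ x t + pdx (pdx v₂) x t))) := by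
    rw [show (fun x t => 1 / 3 * (-(1 / 3) * (u₁ x t - pdx u₁ x t) * (v₂ x t + pdx v₂ x t)))
        = (fun x t => 1 / 3 * (-(1 / 3) * ((u₁ x t - pdx u₁ x t) * (v₂ x t + pdx v₂ x t)))) from by
      funext a b; ring]
    refine ((((hu₁0.sub hu₁1).mul (hv₂0.add hv₂1)).const_mul ((-(1/3) : ℝ))).const_mul ((1:ℝ)/3)).deriv.trans ?_
    simp only [Pi.add_apply, Pi.sub_apply]

  ext i j
  fin_cases i <;> fin_cases j <;>
    simp only [laxU2, laxV2, Matrix.sub_apply, Matrix.add_apply, Matrix.of_apply,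
      Matrix.mul_apply, Fin.sum_univ_three, Matrix.smul_apply, smul_eq_mul,
      Matrix.cons_val', Matrix.cons_val_zero, Matrix.cons_val_one, Matrix.head_cons,
      Matrix.empty_val', Matrix.cons_val_fin_one, Matrix.head_fin_const, Fin.mk_zero,
      Fin.mk_one, fin3_two, Matrix.cons_val_two, Matrix.tail_cons, Matrix.zero_apply]
  case _ =>
    rw [hptc1, hA]
    field_simp
    ring
  case _ =>
    rw [hptu₁, hB1]
    field_simp
    ring
  case _ =>
    rw [hptu₂, hB2]
    field_simp
    ring
  case _ =>
    rw [hptv₁, hK1]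
    field_simp
    ring
  case _ =>
    rw [hptc2, hD1]
    field_simp
    ring
  case _ =>
    rw [hptc3, hO12]
    field_simp
    ring
  case _ =>
    rw [hptv₂, hK2]
    field_simp
    ring
  case _ =>
    rw [hptc3, hO21]
    field_simp
    ring
  case _ =>
    rw [hptc2, hD2]
    field_simp
    ring

/-- CH(2,H) holds identically iff the zero-curvature equation holds
identically for every nonzero spectral parameter λ. -/
theorem chSys2_iff_zeroCurvature (u₁ u₂ v₁ v₂ m₁ m₂ n₁ n₂ : ℝ → ℝ → ℝ) (H : ℝ → ℝ → ℝ)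
    (hu₁ : ContDiff ℝ (⊤ : ℕ∞) (Function.uncurry u₁)) (hu₂ : ContDiff ℝ (⊤ : ℕ∞) (Function.uncurry u₂))
    (hv₁ : ContDiff ℝ (⊤ : ℕ∞) (Function.uncurry v₁)) (hv₂ : ContDiff ℝ (⊤ : ℕ∞) (Function.uncurry v₂))
    (hH : ContDiff ℝ (⊤ : ℕ∞) (Function.uncurry H))
    (hm₁ : m₁ = fun x t => u₁ x t - pdx (pdx u₁) x t)
    (hm₂ : m₂ = fun x t => u₂ x t - pdx (pdx u₂) x t)
    (hn₁ : n₁ = fun x t => v₁ x t - pdx (pdx v₁) x t)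
    (hn₂ : n₂ = fun x t => v₂ x t - pdx (pdx v₂) x t) :
    chSys2 u₁ u₂ v₁ v₂ m₁ m₂ n₁ n₂ H ↔
      ∀ lam : ℝ, lam ≠ 0 → ∀ x t : ℝ,
        (Matrix.of fun i j => pdt (fun x t => laxU2 m₁ m₂ n₁ n₂ lam x t i j) x t)
          - (Matrix.of fun i j =>
              pdx (fun x t => laxV2 u₁ u₂ v₁ v₂ m₁ m₂ n₁ n₂ H lam x t i j) x t)
          + laxU2 m₁ m₂ n₁ n₂ lam x t * laxV2 u₁ u₂ v₁ v₂ m₁ m₂ n₁ n₂ H lam x t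
          - laxV2 u₁ u₂ v₁ v₂ m₁ m₂ n₁ n₂ H lam x t * laxU2 m₁ m₂ n₁ n₂ lam x t = 0 := by
  constructor
  · intro h lam hlam x t
    obtain ⟨e1, e2, e3, e4⟩ := h x t
    rw [zcEval u₁ u₂ v₁ v₂ m₁ m₂ n₁ n₂ H hu₁ hu₂ hv₁ hv₂ hH hm₁ hm₂ hn₁ hn₂ lam hlam x t,
      e1, e2, e3, e4]
    ext i j
    fin_cases i <;> fin_cases j <;> simp [Matrix.vecHead, Matrix.vecTail]
  · intro h x t
    have h3 := h 3 (by norm_num) x t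
    rw [zcEval u₁ u₂ v₁ v₂ m₁ m₂ n₁ n₂ H hu₁ hu₂ hv₁ hv₂ hH hm₁ hm₂ hn₁ hn₂ 3 (by norm_num) x t] at h3
    have k1 := congrFun (congrFun h3 0) 1
    have k2 := congrFun (congrFun h3 0) 2
    have k3 := congrFun (congrFun h3 1) 0
    have k4 := congrFun (congrFun h3 2) 0
    simp [Matrix.smul_apply] at k1 k2 k3 k4
    refine ⟨by linarith, by linarith, by linarith, by linarith⟩
end
end

section
/- Let N ≥ 1, let u_j, v_j : ℝ×ℝ → ℝ (j = 1,…,N) be smooth, set m_j = u_j − ∂_x²u_j and n_j = v_j − ∂_x²v_j, let H : ℝ×ℝ → ℝ be smooth, fix a real λ ≠ 0, and let φ = (φ_1, φ_{21},…,φ_{2N}) : ℝ×ℝ → ℝ^{N+1} be a smooth solution of both linear problems φ_x = U(λ)φ and φ_t = V(λ)φ, where U(λ), V(λ) are the Lax pair matrices. If φ_1 is nowhere vanishing, then with Ω_i = φ_{2i}/φ_1 the conservation law ∂_t(Σ_{i=1}^N m_i Ω_i) = ∂_x(λ^{−2} Σ_{i=1}^N (u_i−u_{i,x})Ω_i + (1/(N+1))λ^{−1}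 Σ_{i=1}^N (u_i−u_{i,x})(v_i+v_{i,x}) + H Σ_{i=1}^N m_i Ω_i) holds identically on ℝ×ℝ. -/
noncomputable section

/- Auxiliary lemmas about partial derivatives of smooth two-variable functions. -/

lemma hasDerivAt_slice_right {E : Type*} [NormedAddCommGroup E] [NormedSpace ℝ E]
    {f : ℝ × ℝ → E} (hf : Differentiable ℝ f) (x t : ℝ) :
    HasDerivAt (fun s => f (x, s)) (fderiv ℝ f (x, t) (0, 1)) t := by
  have h1 : HasFDerivAt f (fderiv ℝ f (x, t)) (x, t) := (hf (x, t)).hasFDerivAt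
  have h2 : HasFDerivAt (fun s : ℝ => ((x, s) : ℝ × ℝ))
      (ContinuousLinearMap.inr ℝ ℝ ℝ) t := hasFDerivAt_prodMk_right x t
  simpa [Function.comp_def] using (h1.comp t h2).hasDerivAt

lemma hasDerivAt_slice_left {E : Type*} [NormedAddCommGroup E] [NormedSpace ℝ E]
    {f : ℝ × ℝ → E} (hf : Differentiable ℝ f) (x t : ℝ) :
    HasDerivAt (fun y => f (y, t)) (fderiv ℝ f (x, t) (1, 0)) x := by
  have h1 : HasFDerivAt f (fderiv ℝ f (x, t)) (x, t) := (hf (x, t)).hasFDerivAt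
  have h2 : HasFDerivAt (fun y : ℝ => ((y, t) : ℝ × ℝ))
      (ContinuousLinearMap.inl ℝ ℝ ℝ) x := hasFDerivAt_prodMk_left x t
  simpa [Function.comp_def] using (h1.comp x h2).hasDerivAt

lemma pdx_eq_fderiv {f : ℝ → ℝ → ℝ} (hf : ContDiff ℝ (⊤ : ℕ∞) (Function.uncurry f)) (x t : ℝ) :
    pdx f x t = fderiv ℝ (Function.uncurry f) (x, t) (1, 0) :=
  (hasDerivAt_slice_left (hf.differentiable (by simp)) x t).deriv

lemma pdt_eq_fderiv {f : ℝ → ℝ → ℝ} (hf : ContDiff ℝ (⊤ : ℕ∞) (Function.uncurry f)) (x t : ℝ) :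
    pdt f x t = fderiv ℝ (Function.uncurry f) (x, t) (0, 1) :=
  (hasDerivAt_slice_right (hf.differentiable (by simp)) x t).deriv

lemma hasDerivAt_fderiv_slice_right {f : ℝ × ℝ → ℝ} (hf : ContDiff ℝ (⊤ : ℕ∞) f)
    (x t : ℝ) (v : ℝ × ℝ) :
    HasDerivAt (fun s => fderiv ℝ f (x, s) v)
      (fderiv ℝ (fderiv ℝ f) (x, t) (0, 1) v) t := by
  have h := hasDerivAt_slice_right (f := fderiv ℝ f)
    ((hf.fderiv_right (m := 1) (by exact WithTop.coe_le_coe.mpr le_top)).differentiable one_ne_zero) x t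
  simpa using h.clm_apply (hasDerivAt_const t v)

lemma hasDerivAt_fderiv_slice_left {f : ℝ × ℝ → ℝ} (hf : ContDiff ℝ (⊤ : ℕ∞) f)
    (x t : ℝ) (v : ℝ × ℝ) :
    HasDerivAt (fun y => fderiv ℝ f (y, t) v)
      (fderiv ℝ (fderiv ℝ f) (x, t) (1, 0) v) x := by
  have h := hasDerivAt_slice_left (f := fderiv ℝ f)
    ((hf.fderiv_right (m := 1) (by exact WithTop.coe_le_coe.mpr le_top)).differentiable one_ne_zero) x t
  simpa using h.clm_apply (hasDerivAt_const x v)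

lemma mixed_fderiv_symm {f : ℝ × ℝ → ℝ} (hf : ContDiff ℝ (⊤ : ℕ∞) f) (p v w : ℝ × ℝ) :
    fderiv ℝ (fderiv ℝ f) p v w = fderiv ℝ (fderiv ℝ f) p w v :=
  second_derivative_symmetric (fun y => (hf.differentiable (by simp) y).hasFDerivAt)
    (((hf.fderiv_right (m := 1) (by exact WithTop.coe_le_coe.mpr le_top)).differentiable one_ne_zero p).hasFDerivAt) v w

/-- a smooth eigenfunction of both Lax problems with nowhere-vanishing first
component yields the conservation law for the generating function `Σ mᵢ Ωᵢ`. -/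
theorem conservation_law_of_laxPair (N : ℕ) (hN : 1 ≤ N)
    (u v m n : Fin N → ℝ → ℝ → ℝ) (H : ℝ → ℝ → ℝ)
    (hu : ∀ j, ContDiff ℝ (⊤ : ℕ∞) (Function.uncurry (u j)))
    (hv : ∀ j, ContDiff ℝ (⊤ : ℕ∞) (Function.uncurry (v j)))
    (hH : ContDiff ℝ (⊤ : ℕ∞) (Function.uncurry H))
    (hm : ∀ j, m j = fun x t => u j x t - pdx (pdx (u j)) x t)
    (hn : ∀ j, n j = fun x t => v j x t - pdx (pdx (v j)) x t)
    (lam : ℝ) (hlam : lam ≠ 0)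
    (φ : Fin (N + 1) → ℝ → ℝ → ℝ)
    (hφ : ∀ i, ContDiff ℝ (⊤ : ℕ∞) (Function.uncurry (φ i)))
    (hφx : ∀ i : Fin (N + 1), ∀ x t : ℝ,
      pdx (φ i) x t = ∑ j : Fin (N + 1), laxU N m n lam x t i j * φ j x t)
    (hφt : ∀ i : Fin (N + 1), ∀ x t : ℝ,
      pdt (φ i) x t = ∑ j : Fin (N + 1), laxV N u v m n H lam x t i j * φ j x t)
    (hne : ∀ x t, φ 0 x t ≠ 0) :
    ∀ x t : ℝ,
      pdt (fun x t => ∑ i : Fin N, m i x t * (φ i.succ x t / φ 0 x t)) x t =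
        pdx (fun x t =>
          lam⁻¹ ^ 2 * ∑ i : Fin N, (u i x t - pdx (u i) x t) * (φ i.succ x t / φ 0 x t) +
            (1 / ((N : ℝ) + 1)) * lam⁻¹ *
              ∑ i : Fin N, (u i x t - pdx (u i) x t) * (v i x t + pdx (v i) x t) +
            H x t * ∑ i : Fin N, m i x t * (φ i.succ x t / φ 0 x t)) x t := by
  have hc : ((N : ℝ) + 1) ≠ 0 := by positivity
  set g : ℝ × ℝ → ℝ := Function.uncurry (φ 0) with hgdef
  have hg : ContDiff ℝ (⊤ : ℕ∞) g := hφ 0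
  have hgd : Differentiable ℝ g := hg.differentiable (by simp)
  -- Claim A: the conserved density in terms of the logarithmic x-derivative of φ₀.
  have keyA : ∀ x t : ℝ, (∑ i : Fin N, m i x t * (φ i.succ x t / φ 0 x t))
      = (((N : ℝ) + 1) * (fderiv ℝ g (x, t) (1, 0) / g (x, t)) + (N : ℝ)) / lam := by
    intro x t
    have h := hφx 0 x t
    rw [Fin.sum_univ_succ] at h
    simp only [laxU, Matrix.of_apply, dif_pos rfl, dif_neg (Fin.succ_ne_zero _), dite_true,
      Fin.pred_succ] at h
    rw [pdx_eq_fderiv (hφ 0)] at h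
    rw [show g (x, t) = φ 0 x t from rfl]
    have hne' : g (x, t) ≠ 0 := hne x t
    have h2 : ∑ j : Fin N, 1 / ((N : ℝ) + 1) * (lam * m j x t) * φ j.succ x t
        = 1 / ((N : ℝ) + 1) * lam * ∑ j : Fin N, m j x t * φ j.succ x t := by
      rw [Finset.mul_sum]; exact Finset.sum_congr rfl fun i _ => by ring
    rw [h2] at h
    have h' : fderiv ℝ g (x, t) (1, 0) * ((N : ℝ) + 1)
        = -((N : ℝ) * φ 0 x t) + lam * ∑ j : Fin N, m j x t * φ j.succ x t := by
      rw [h]; field_simp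
    have hsum : (∑ i : Fin N, m i x t * (φ i.succ x t / φ 0 x t))
        = (∑ i : Fin N, m i x t * φ i.succ x t) / φ 0 x t := by
      rw [Finset.sum_div]; exact Finset.sum_congr rfl fun i _ => by ring
    rw [hsum]
    have hne'' : φ 0 x t ≠ 0 := hne x t
    rw [div_eq_div_iff hne'' hlam]
    field_simp
    linear_combination -h'
  -- Claim B: the flux in terms of the logarithmic t-derivative of φ₀.
  have keyB : ∀ x t : ℝ,
      (lam⁻¹ ^ 2 * ∑ i : Fin N, (u i x t - pdx (u i) x t) * (φ i.succ x t / φ 0 x t) +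
        (1 / ((N : ℝ) + 1)) * lam⁻¹ *
          ∑ i : Fin N, (u i x t - pdx (u i) x t) * (v i x t + pdx (v i) x t) +
        H x t * ∑ i : Fin N, m i x t * (φ i.succ x t / φ 0 x t))
      = (((N : ℝ) + 1) * (fderiv ℝ g (x, t) (0, 1) / g (x, t)) + (N : ℝ) * lam⁻¹ ^ 2) / lam := by
    intro x t
    have h := hφt 0 x t
    rw [Fin.sum_univ_succ] at h
    simp only [laxV, Matrix.of_apply, dif_pos rfl, dif_neg (Fin.succ_ne_zero _), dite_true,
      Fin.pred_succ] at h
    rw [pdt_eq_fderiv (hφ 0)] at h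
    rw [show g (x, t) = φ 0 x t from rfl]
    set A := ∑ i' : Fin N, (u i' x t - pdx (u i') x t) * (v i' x t + pdx (v i') x t) with hA
    set T := ∑ i : Fin N, (u i x t - pdx (u i) x t) * φ i.succ x t with hT
    set S := ∑ i : Fin N, m i x t * φ i.succ x t with hS
    have hsplit : ∑ j : Fin N,
        (1 / ((N : ℝ) + 1) * (lam⁻¹ * (u j x t - pdx (u j) x t) + lam * m j x t * H x t)) *
          φ j.succ x t
        = 1 / ((N : ℝ) + 1) * lam⁻¹ * T + 1 / ((N : ℝ) + 1) * lam * H x t * S := by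
      rw [hT, hS, Finset.mul_sum, Finset.mul_sum, ← Finset.sum_add_distrib]
      exact Finset.sum_congr rfl fun j _ => by ring
    rw [hsplit] at h
    have h' : fderiv ℝ g (x, t) (0, 1) * (((N : ℝ) + 1) * ((N : ℝ) + 1))
        = (-(N : ℝ) * lam⁻¹ ^ 2 * ((N : ℝ) + 1) + A) * φ 0 x t
          + lam⁻¹ * T * ((N : ℝ) + 1) + lam * H x t * S * ((N : ℝ) + 1) := by
      rw [h]; field_simp; ring
    have hT' : ∑ i : Fin N, (u i x t - pdx (u i) x t) * (φ i.succ x t / φ 0 x t)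
        = T / φ 0 x t := by
      rw [hT, Finset.sum_div]; exact Finset.sum_congr rfl fun i _ => by ring
    have hS' : ∑ i : Fin N, m i x t * (φ i.succ x t / φ 0 x t) = S / φ 0 x t := by
      rw [hS, Finset.sum_div]; exact Finset.sum_congr rfl fun i _ => by ring
    rw [hT', hS']
    have hne'' : φ 0 x t ≠ 0 := hne x t
    have hg' := eq_div_of_mul_eq (mul_ne_zero hc hc) h'
    rw [hg']
    field_simp
    ring
  -- Rewrite both sides using the claims.
  have hLfun : (fun x t => ∑ i : Fin N, m i x t * (φ i.succ x t / φ 0 x t))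
      = fun x t => (((N : ℝ) + 1) * (fderiv ℝ g (x, t) (1, 0) / g (x, t)) + (N : ℝ)) / lam := by
    funext x t; exact keyA x t
  have hRfun : (fun x t =>
        lam⁻¹ ^ 2 * ∑ i : Fin N, (u i x t - pdx (u i) x t) * (φ i.succ x t / φ 0 x t) +
          (1 / ((N : ℝ) + 1)) * lam⁻¹ *
            ∑ i : Fin N, (u i x t - pdx (u i) x t) * (v i x t + pdx (v i) x t) +
          H x t * ∑ i : Fin N, m i x t * (φ i.succ x t / φ 0 x t))
      = fun x t => (((N : ℝ) + 1) * (fderiv ℝ g (x, t) (0, 1) / g (x, t))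
          + (N : ℝ) * lam⁻¹ ^ 2) / lam := by
    funext x t; exact keyB x t
  intro x t
  rw [hLfun, hRfun]
  have hne' : g (x, t) ≠ 0 := hne x t
  -- time derivative of the rewritten density
  have hb : HasDerivAt (fun s => g (x, s)) (fderiv ℝ g (x, t) (0, 1)) t :=
    hasDerivAt_slice_right hgd x t
  have ha : HasDerivAt (fun s => fderiv ℝ g (x, s) (1, 0))
      (fderiv ℝ (fderiv ℝ g) (x, t) (0, 1) (1, 0)) t :=
    hasDerivAt_fderiv_slice_right hg x t (1, 0)
  have hQ : HasDerivAt
      (fun s => (((N : ℝ) + 1) * (fderiv ℝ g (x, s) (1, 0) / g (x, s)) + (N : ℝ)) / lam)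
      ((((N : ℝ) + 1) * ((fderiv ℝ (fderiv ℝ g) (x, t) (0, 1) (1, 0) * g (x, t)
        - fderiv ℝ g (x, t) (1, 0) * fderiv ℝ g (x, t) (0, 1)) / g (x, t) ^ 2)) / lam) t :=
    (((ha.div hb hne').const_mul _).add_const _).div_const _
  -- space derivative of the rewritten flux
  have hb' : HasDerivAt (fun y => g (y, t)) (fderiv ℝ g (x, t) (1, 0)) x :=
    hasDerivAt_slice_left hgd x t
  have ha' : HasDerivAt (fun y => fderiv ℝ g (y, t) (0, 1))
      (fderiv ℝ (fderiv ℝ g) (x, t) (1, 0) (0, 1)) x :=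
    hasDerivAt_fderiv_slice_left hg x t (0, 1)
  have hR : HasDerivAt
      (fun y => (((N : ℝ) + 1) * (fderiv ℝ g (y, t) (0, 1) / g (y, t))
          + (N : ℝ) * lam⁻¹ ^ 2) / lam)
      ((((N : ℝ) + 1) * ((fderiv ℝ (fderiv ℝ g) (x, t) (1, 0) (0, 1) * g (x, t)
        - fderiv ℝ g (x, t) (0, 1) * fderiv ℝ g (x, t) (1, 0)) / g (x, t) ^ 2)) / lam) x :=
    (((ha'.div hb' hne').const_mul _).add_const _).div_const _
  show deriv _ t = deriv _ x
  rw [hQ.deriv, hR.deriv, mixed_fderiv_symm hg (x, t) (0, 1) (1, 0)]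
  ring
end
end

section
/- Let u : ℝ×ℝ → ℝ be smooth and set m = u − ∂_x²u. Consider the two-component system CH(1,H) with the choices v_1 ≡ 2 (constant, so n_1 ≡ 2) and H = −u. Then: (i) the n-equation n_{1,t} = (n_1H)_x − n_1H − (1/2)n_1(u−u_x)(v_1+v_{1,x}) holds identically for any smooth u; and (ii) the m-equation m_t = (mH)_x + mH + (1/2)m(u−u_x)(v_1+v_{1,x}) holds identically if and only if u satisfies the Camassa–Holm equation m_t + 2mu_x + m_xu = 0 with m = u − u_{xx}. -/
noncomputable section

lemma hasDerivAt_pdx_aux (f : ℝ → ℝ → ℝ) (hf : ContDiff ℝ (⊤ : ℕ∞) (Function.uncurry f))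
    (x t : ℝ) : HasDerivAt (fun y => f y t) (fderiv ℝ (Function.uncurry f) (x, t) (1, 0)) x := by
  have h1 : HasDerivAt (fun y : ℝ => ((y, t) : ℝ × ℝ)) (1, 0) x :=
    (hasDerivAt_id x).prodMk (hasDerivAt_const x t)
  have h2 : HasFDerivAt (Function.uncurry f) (fderiv ℝ (Function.uncurry f) (x, t)) (x, t) :=
    (hf.differentiable (by simp) (x, t)).hasFDerivAt
  exact h2.comp_hasDerivAt x h1

lemma hasDerivAt_pdx (f : ℝ → ℝ → ℝ) (hf : ContDiff ℝ (⊤ : ℕ∞) (Function.uncurry f))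
    (x t : ℝ) : HasDerivAt (fun y => f y t) (pdx f x t) x := by
  have h := hasDerivAt_pdx_aux f hf x t
  simpa [pdx, h.deriv] using h

lemma pdx_eq (f : ℝ → ℝ → ℝ) (hf : ContDiff ℝ (⊤ : ℕ∞) (Function.uncurry f)) :
    pdx f = fun x t => fderiv ℝ (Function.uncurry f) (x, t) (1, 0) := by
  funext x t; exact (hasDerivAt_pdx_aux f hf x t).deriv

lemma smooth_pdx (f : ℝ → ℝ → ℝ) (hf : ContDiff ℝ (⊤ : ℕ∞) (Function.uncurry f)) :
    ContDiff ℝ (⊤ : ℕ∞) (Function.uncurry (pdx f)) := by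
  have : Function.uncurry (pdx f) = fun p : ℝ × ℝ => fderiv ℝ (Function.uncurry f) p (1, 0) := by
    funext p
    simpa [Function.uncurry] using congrFun (congrFun (pdx_eq f hf) p.1) p.2
  rw [this]
  exact (hf.fderiv_right (by simp)).clm_apply contDiff_const

/-- in CH(1,H) with `v₁ ≡ 2` and `H = −u`, the n-equation holds identically,
and the m-equation holds identically iff u solves the Camassa–Holm equation
`mₜ + 2muₓ + mₓu = 0`, `m = u − uₓₓ`. -/
theorem ch1_reduces_to_CH (u : ℝ → ℝ → ℝ) (hu : ContDiff ℝ (⊤ : ℕ∞) (Function.uncurry u))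
    (m : ℝ → ℝ → ℝ) (hm : m = fun x t => u x t - pdx (pdx u) x t)
    (v₁ n₁ H : ℝ → ℝ → ℝ)
    (hv₁ : v₁ = fun _ _ => 2)
    (hn₁ : n₁ = fun x t => v₁ x t - pdx (pdx v₁) x t)
    (hH : H = fun x t => -u x t) :
    (∀ x t : ℝ,
      pdt n₁ x t =
        pdx (fun x t => n₁ x t * H x t) x t - n₁ x t * H x t -
          (1 / 2) * n₁ x t * (u x t - pdx u x t) * (v₁ x t + pdx v₁ x t)) ∧
    ((∀ x t : ℝ,
        pdt m x t =
          pdx (fun x t => m x t * H x t) x t + m x t * H x t +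
            (1 / 2) * m x t * (u x t - pdx u x t) * (v₁ x t + pdx v₁ x t)) ↔
      (∀ x t : ℝ, pdt m x t + 2 * m x t * pdx u x t + pdx m x t * u x t = 0)) := by
  subst hv₁ hH hn₁ hm
  -- basic smoothness facts
  have hHsm : ContDiff ℝ (⊤ : ℕ∞) (Function.uncurry (fun x t => -u x t)) := by
    have : Function.uncurry (fun x t : ℝ => -u x t) = fun p : ℝ × ℝ => -Function.uncurry u p := rfl
    rw [this]; exact hu.neg
  have hmsm : ContDiff ℝ (⊤ : ℕ∞) (Function.uncurry (fun x t => u x t - pdx (pdx u) x t)) := by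
    have : Function.uncurry (fun x t : ℝ => u x t - pdx (pdx u) x t)
        = fun p : ℝ × ℝ => Function.uncurry u p - Function.uncurry (pdx (pdx u)) p := rfl
    rw [this]; exact hu.sub (smooth_pdx _ (smooth_pdx _ hu))
  -- spatial derivatives
  have hdH : ∀ x t : ℝ, pdx (fun x t => -u x t) x t = -pdx u x t := by
    intro x t
    have := (hasDerivAt_pdx u hu x t).neg
    simpa [pdx] using this.deriv
  have hv0 : pdx (fun _ _ : ℝ => (2 : ℝ)) = fun _ _ => 0 := by
    funext x t; simp [pdx]
  constructor
  · -- n-equation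
    have hA : (fun x t : ℝ => (fun _ _ : ℝ => (2:ℝ)) x t - pdx (pdx fun _ _ : ℝ => (2:ℝ)) x t)
        = (fun _ _ : ℝ => (2:ℝ)) := by
      funext a b; simp [pdx]
    rw [hA]
    intro x t
    have h1 : pdt (fun _ _ : ℝ => (2:ℝ)) x t = 0 := by simp [pdt]
    have h2 : pdx (fun x t : ℝ => (fun _ _ : ℝ => (2:ℝ)) x t * (fun x t => -u x t) x t) x t
        = 2 * (-pdx u x t) := by
      have h := ((hasDerivAt_pdx u hu x t).neg).const_mul (2:ℝ)
      simpa [pdx] using h.deriv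
    have h3 : pdx (fun _ _ : ℝ => (2:ℝ)) x t = 0 := by simp [pdx]
    rw [h1, h2, h3]
    simp only []
    ring
  · -- m-equation ⟺ CH
    have key : ∀ x t : ℝ,
        pdx (fun x t => (u x t - pdx (pdx u) x t) * (-u x t)) x t
          = pdx (fun x t => u x t - pdx (pdx u) x t) x t * (-u x t)
            + (u x t - pdx (pdx u) x t) * (-pdx u x t) := by
      intro x t
      have h1 := hasDerivAt_pdx _ hmsm x t
      have h2 : HasDerivAt (fun y => -u y t) (-pdx u x t) x := (hasDerivAt_pdx u hu x t).neg
      have h := h1.mul h2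
      exact h.deriv
    constructor
    · intro h x t
      have hx := h x t
      simp only [hv0] at hx
      rw [key x t] at hx
      beta_reduce at hx ⊢
      nlinarith [hx]
    · intro h x t
      have hx := h x t
      simp only [hv0]
      rw [key x t]
      beta_reduce at hx ⊢
      nlinarith [hx]
end
end

section
/- Let u : ℝ×ℝ → ℝ be smooth and set m = u − ∂_x²u. Consider the two-component system CH(1,H) with the choices u_1 = v_1 = u (so m_1 = n_1 = m) and H = −(1/2)(u² − u_x²). Then each of the two equations of the system holds identically if and only if u satisfies the cubic Camassa–Holm (modified CH) equation m_t + (1/2)[m(u² − u_x²)]_x = 0 with m = u − u_{xx}. -/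
noncomputable section

/-- in CH(1,H) with `u₁ = v₁ = u` (so `m₁ = n₁ = m`) and
`H = −(1/2)(u² − uₓ²)`, each of the two equations of the system holds identically iff
u solves the cubic (modified) Camassa–Holm equation
`mₜ + (1/2)[m(u² − uₓ²)]ₓ = 0`, `m = u − uₓₓ`. -/
theorem ch1_reduces_to_mCH (u : ℝ → ℝ → ℝ) (hu : ContDiff ℝ (⊤ : ℕ∞) (Function.uncurry u))
    (m : ℝ → ℝ → ℝ) (hm : m = fun x t => u x t - pdx (pdx u) x t)
    (H : ℝ → ℝ → ℝ) (hH : H = fun x t => -(1 / 2) * (u x t ^ 2 - (pdx u x t) ^ 2)) :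
    ((∀ x t : ℝ,
        pdt m x t =
          pdx (fun x t => m x t * H x t) x t + m x t * H x t +
            (1 / 2) * m x t * (u x t - pdx u x t) * (u x t + pdx u x t)) ↔
      (∀ x t : ℝ,
        pdt m x t +
          (1 / 2) * pdx (fun x t => m x t * (u x t ^ 2 - (pdx u x t) ^ 2)) x t = 0)) ∧
    ((∀ x t : ℝ,
        pdt m x t =
          pdx (fun x t => m x t * H x t) x t - m x t * H x t -
            (1 / 2) * m x t * (u x t - pdx u x t) * (u x t + pdx u x t)) ↔
      (∀ x t : ℝ,
        pdt m x t +
          (1 / 2) * pdx (fun x t => m x t * (u x t ^ 2 - (pdx u x t) ^ 2)) x t = 0)) := by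
  subst hH
  have key : ∀ x t : ℝ,
      pdx (fun x t => m x t * (-(1 / 2) * (u x t ^ 2 - (pdx u x t) ^ 2))) x t
        = -(1/2) * pdx (fun x t => m x t * (u x t ^ 2 - (pdx u x t) ^ 2)) x t := by
    intro x t
    simp only [pdx]
    have e : (fun y => m y t * (-(1 / 2) * (u y t ^ 2 - deriv (fun z => u z t) y ^ 2)))
        = fun y => -(1/2) * (m y t * (u y t ^ 2 - deriv (fun z => u z t) y ^ 2)) := by
      funext y; ring
    rw [e, deriv_const_mul_field]
  have z : ∀ x t : ℝ,
      m x t * (-(1 / 2) * (u x t ^ 2 - (pdx u x t) ^ 2)) +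
        1 / 2 * m x t * (u x t - pdx u x t) * (u x t + pdx u x t) = 0 := by
    intro x t; ring
  constructor
  · constructor
    · intro h x t; have h' := h x t
      simp only [] at h'; rw [key] at h'
      linarith [z x t, h']
    · intro h x t; have h' := h x t
      simp only []; rw [key]
      linarith [z x t, h']
  · constructor
    · intro h x t; have h' := h x t
      simp only [] at h'; rw [key] at h'
      linarith [z x t, h']
    · intro h x t; have h' := h x t
      simp only []; rw [key]
      linarith [z x t, h']
end
end

section
/- Let C₁, A₁, A₂, A₃, A₄ be real constants with A₁ ≠ 0 and A₄ ≠ 0. Define functions of t by q₁(t) = C₁, p₁(t) = A₄ e^{(4/27)(A₂+A₃)t}, r₁(t) = p₁(t)/A₁, s₁(t) = (A₂/A₄) e^{−(4/27)(A₂+A₃)t}, w₁(t) = A₃/r₁(t). Then (q₁, p₁, r₁, s₁, w₁) solves the single-peakon dynamical system of the four-component equation with H = 0: q₁' = 0, p₁' = (4/27)p₁(p₁s₁ + r₁w₁), r₁' = (4/27)r₁(p₁s₁ + r₁w₁), s₁' = −(4/27)s₁(p₁s₁ + r₁w₁), w₁' = −(4/27)w₁(p₁s₁ + r₁w₁). 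-/
/-! With `k = (4/27)(A₂ + A₃)`, the functions `p₁, r₁` are multiples of `exp (k t)` and
`s₁, w₁` multiples of `exp (-k t)`, so the products `p₁ s₁ = A₂` and `r₁ w₁ = A₃` are constant.
Hence `p₁ s₁ + r₁ w₁ = A₂ + A₃` along the solution, and the system reduces to the linear
equations `x' = ± k x`, which these exponentials satisfy. -/

open Real

lemma deriv_const_mul_exp_mul (c k t : ℝ) :
    deriv (fun t => c * exp (k * t)) t = k * (c * exp (k * t)) := by
  have h : HasDerivAt (fun t => c * exp (k * t)) (c * (exp (k * t) * k)) t := by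
    simpa using (((hasDerivAt_id t).const_mul k).exp).const_mul c
  rw [h.deriv]
  ring

lemma const_mul_exp_mul_mul_const_mul_exp_neg_mul (a b k t : ℝ) :
    a * exp (k * t) * (b * exp (-k * t)) = a * b := by
  rw [neg_mul, exp_neg]
  field_simp

/-- the explicit stationary single-peakon functions solve the N = 1 peakon
dynamical system of the four-component equation with H = 0. -/
theorem stationary_peakon_solution (C₁ A₁ A₂ A₃ A₄ : ℝ) (hA₁ : A₁ ≠ 0) (hA₄ : A₄ ≠ 0)
    (q₁ p₁ r₁ s₁ w₁ : ℝ → ℝ)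
    (hq : q₁ = fun _ => C₁)
    (hp : p₁ = fun t => A₄ * Real.exp ((4 / 27) * (A₂ + A₃) * t))
    (hr : r₁ = fun t => p₁ t / A₁)
    (hs : s₁ = fun t => (A₂ / A₄) * Real.exp (-(4 / 27) * (A₂ + A₃) * t))
    (hw : w₁ = fun t => A₃ / r₁ t) :
    ∀ t : ℝ,
      deriv q₁ t = 0 ∧
      deriv p₁ t = (4 / 27) * p₁ t * (p₁ t * s₁ t + r₁ t * w₁ t) ∧
      deriv r₁ t = (4 / 27) * r₁ t * (p₁ t * s₁ t + r₁ t * w₁ t) ∧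
      deriv s₁ t = -(4 / 27) * s₁ t * (p₁ t * s₁ t + r₁ t * w₁ t) ∧
      deriv w₁ t = -(4 / 27) * w₁ t * (p₁ t * s₁ t + r₁ t * w₁ t) := by
  set k : ℝ := (4 / 27) * (A₂ + A₃) with hk
  have hs' : s₁ = fun t => (A₂ / A₄) * exp (-k * t) := by
    rw [hs, hk, neg_mul]
  have hr' : r₁ = fun t => (A₄ / A₁) * exp (k * t) := by
    funext t
    rw [hr, hp]
    ring
  have hw' : w₁ = fun t => (A₃ * A₁ / A₄) * exp (-k * t) := by
    funext t
    rw [hw, hr', neg_mul, exp_neg]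
    field_simp
  have hflow : ∀ t, p₁ t * s₁ t + r₁ t * w₁ t = A₂ + A₃ := by
    intro t
    simp only [hp, hs', hr', hw', const_mul_exp_mul_mul_const_mul_exp_neg_mul]
    field_simp
  intro t
  refine ⟨by simp [hq], ?_, ?_, ?_, ?_⟩
  all_goals
    rw [hflow t]
    simp only [hp, hr', hs', hw', deriv_const_mul_exp_mul, hk]
    ring
end

section
/- Let q₁, p₁, r₁, s₁, w₁ : ℝ → ℝ be differentiable functions satisfying the ODE system q₁' = 0, p₁' = (4/27)p₁(p₁s₁ + r₁w₁), r₁' = (4/27)r₁(p₁s₁ + r₁w₁), s₁' = −(4/27)s₁(p₁s₁ + r₁w₁), w₁' = −(4/27)w₁(p₁s₁ + r₁w₁). Then q₁, the product p₁s₁, and the product r₁w₁ are each constant in t. Consequently the peakon position is stationary. -/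
/-! Along the flow, `p₁` and `r₁` grow at the rate `(4/27)(p₁s₁ + r₁w₁)` while `s₁` and `w₁`
decay at the same rate, so the products `p₁s₁` and `r₁w₁` have zero derivative. -/

theorem is_const_mul_of_opposite_rates {f g k : ℝ → ℝ}
    (hf : Differentiable ℝ f) (hg : Differentiable ℝ g)
    (hf' : ∀ t, deriv f t = k t * f t) (hg' : ∀ t, deriv g t = -k t * g t) (t s : ℝ) :
    f t * g t = f s * g s := by
  refine is_const_of_deriv_eq_zero (hf.mul hg) (fun x => ?_) t s
  rw [deriv_mul (hf x) (hg x), hf' x, hg' x]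
  ring

/-- along any solution of the N = 1 peakon system with H = 0, the position
q₁ and the products p₁s₁ and r₁w₁ are constants of motion. -/
theorem peakon_H0_invariants (q₁ p₁ r₁ s₁ w₁ : ℝ → ℝ)
    (hq : Differentiable ℝ q₁) (hp : Differentiable ℝ p₁) (hr : Differentiable ℝ r₁)
    (hs : Differentiable ℝ s₁) (hw : Differentiable ℝ w₁)
    (heq : ∀ t : ℝ,
      deriv q₁ t = 0 ∧
      deriv p₁ t = (4 / 27) * p₁ t * (p₁ t * s₁ t + r₁ t * w₁ t) ∧
      deriv r₁ t = (4 / 27) * r₁ t * (p₁ t * s₁ t + r₁ t * w₁ t) ∧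
      deriv s₁ t = -(4 / 27) * s₁ t * (p₁ t * s₁ t + r₁ t * w₁ t) ∧
      deriv w₁ t = -(4 / 27) * w₁ t * (p₁ t * s₁ t + r₁ t * w₁ t)) :
    ∀ t : ℝ,
      q₁ t = q₁ 0 ∧ p₁ t * s₁ t = p₁ 0 * s₁ 0 ∧ r₁ t * w₁ t = r₁ 0 * w₁ 0 := by
  choose hq' hp' hr' hs' hw' using heq
  let rate t := 4 / 27 * (p₁ t * s₁ t + r₁ t * w₁ t)
  intro t
  refine ⟨is_const_of_deriv_eq_zero hq hq' t 0, ?_, ?_⟩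
  · refine is_const_mul_of_opposite_rates (k := rate) hp hs (fun x => ?_) (fun x => ?_) t 0
    · rw [hp']; ring
    · rw [hs']; ring
  · refine is_const_mul_of_opposite_rates (k := rate) hr hw (fun x => ?_) (fun x => ?_) t 0
    · rw [hr']; ring
    · rw [hw']; ring
end

section
/- Let A₁, A₂, A₃, A₄, A₅ be real constants with A₁ ≠ 0 and A₅ ≠ 0. Define functions of t by q₁(t) = (2/27)(A₂+A₃)t + A₄, p₁(t) = A₅ e^{(2/27)(A₂+A₃)t}, r₁(t) = p₁(t)/A₁, s₁(t) = (A₂/A₅) e^{−(2/27)(A₂+A₃)t}, w₁(t) = A₃/r₁(t). Then (q₁, p₁, r₁, s₁, w₁) solves the single-peakon dynamical system of the four-component equation with H = −(1/9)[(u₁−u_{1,x})(v₁+v_{1,x}) + (u₂−u_{2,x})(v₂+v_{2,x})]: q₁' = (2/27)(p₁s₁ + r₁w₁), p₁' = (2/27)p₁(p₁s₁ + r₁w₁), r₁' = (2/27)r₁(p₁s₁ + r₁w₁), s₁' = −(2/27)s₁(p₁s₁ + r₁w₁), w₁' = −(2/27)w₁(p₁s₁ + r₁w₁). -/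
open Real

/-! Writing `c = (2/27)(A₂ + A₃)`, the components `p₁, r₁` are multiples of `e^{ct}` and
`s₁, w₁` multiples of `e^{-ct}`, so the common factor `p₁s₁ + r₁w₁ = A₂ + A₃` is constant.
Every equation of the system thus becomes the linear equation `f' = ±c f` (resp. `q₁' = c`),
which the explicit exponentials solve. -/

theorem deriv_of_eq_const_mul_exp {f : ℝ → ℝ} {a b : ℝ} (hf : f = fun t => a * exp (b * t))
    (t : ℝ) : deriv f t = b * f t := by
  subst hf
  rw [((hasDerivAt_const_mul b).exp.const_mul a).deriv]
  ring

/-- the explicit single-peakon functions solve the N = 1 peakon dynamical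
system of the four-component equation of Example 2
(H = −(1/9)[(u₁−u₁ₓ)(v₁+v₁ₓ) + (u₂−u₂ₓ)(v₂+v₂ₓ)]). -/
theorem peakon_solution_example2 (A₁ A₂ A₃ A₄ A₅ : ℝ) (hA₁ : A₁ ≠ 0) (hA₅ : A₅ ≠ 0)
    (q₁ p₁ r₁ s₁ w₁ : ℝ → ℝ)
    (hq : q₁ = fun t => (2 / 27) * (A₂ + A₃) * t + A₄)
    (hp : p₁ = fun t => A₅ * Real.exp ((2 / 27) * (A₂ + A₃) * t))
    (hr : r₁ = fun t => p₁ t / A₁)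
    (hs : s₁ = fun t => (A₂ / A₅) * Real.exp (-(2 / 27) * (A₂ + A₃) * t))
    (hw : w₁ = fun t => A₃ / r₁ t) :
    ∀ t : ℝ,
      deriv q₁ t = (2 / 27) * (p₁ t * s₁ t + r₁ t * w₁ t) ∧
      deriv p₁ t = (2 / 27) * p₁ t * (p₁ t * s₁ t + r₁ t * w₁ t) ∧
      deriv r₁ t = (2 / 27) * r₁ t * (p₁ t * s₁ t + r₁ t * w₁ t) ∧
      deriv s₁ t = -(2 / 27) * s₁ t * (p₁ t * s₁ t + r₁ t * w₁ t) ∧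
      deriv w₁ t = -(2 / 27) * w₁ t * (p₁ t * s₁ t + r₁ t * w₁ t) := by
  have hr_exp : r₁ = fun t => A₅ / A₁ * exp ((2 / 27) * (A₂ + A₃) * t) := by
    rw [hr, hp]; funext t; ring
  have hw_exp : w₁ = fun t => A₃ * A₁ / A₅ * exp (-(2 / 27) * (A₂ + A₃) * t) := by
    rw [hw, hr_exp]; funext t
    rw [neg_mul, neg_mul, exp_neg]
    field_simp
  intro t
  have hfactor : p₁ t * s₁ t + r₁ t * w₁ t = A₂ + A₃ := by
    rw [hp, hr_exp, hs, hw_exp]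
    simp only [neg_mul, exp_neg]
    field_simp
  have hdq : deriv q₁ t = (2 / 27) * (A₂ + A₃) := by
    rw [hq, ((hasDerivAt_const_mul ((2 / 27) * (A₂ + A₃))).add_const A₄).deriv]
  refine ⟨?_, ?_, ?_, ?_, ?_⟩
  · linear_combination hdq - (2 / 27) * hfactor
  · linear_combination deriv_of_eq_const_mul_exp hp t - (2 / 27 * p₁ t) * hfactor
  · linear_combination deriv_of_eq_const_mul_exp hr_exp t - (2 / 27 * r₁ t) * hfactor
  · linear_combination deriv_of_eq_const_mul_exp hs t + (2 / 27 * s₁ t) * hfactor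
  · linear_combination deriv_of_eq_const_mul_exp hw_exp t + (2 / 27 * w₁ t) * hfactor
end

section
/- Let q₁, p₁, r₁, s₁, w₁ : ℝ → ℝ be differentiable functions satisfying the ODE system q₁' = (2/27)(p₁s₁ + r₁w₁), p₁' = (2/27)p₁(p₁s₁ + r₁w₁), r₁' = (2/27)r₁(p₁s₁ + r₁w₁), s₁' = −(2/27)s₁(p₁s₁ + r₁w₁), w₁' = −(2/27)w₁(p₁s₁ + r₁w₁). Then the products p₁s₁ and r₁w₁ are each constant in t, and consequently q₁ is an affine function of t: q₁(t) = q₁(0) + (2/27)(p₁(0)s₁(0) + r₁(0)w₁(0))·t for all t. -/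
/-! The right-hand sides of the `p₁` and `s₁` equations are opposite multiples of `p₁` and `s₁`
by the same factor, so `(p₁ s₁)' = 0`; likewise for `r₁ w₁`. Hence `q₁'` is constant along the
flow and `q₁` is affine. -/

theorem mul_eq_of_deriv_eq_mul_of_deriv_eq_neg_mul {f g a : ℝ → ℝ}
    (hf : Differentiable ℝ f) (hg : Differentiable ℝ g)
    (hf' : ∀ t, deriv f t = a t * f t) (hg' : ∀ t, deriv g t = -a t * g t) (t s : ℝ) :
    f t * g t = f s * g s := by
  refine is_const_of_deriv_eq_zero (hf.mul hg) (fun x => ?_) t s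
  rw [deriv_mul (hf x) (hg x), hf' x, hg' x]
  ring

theorem eq_add_mul_of_deriv_eq_const {f : ℝ → ℝ} {c : ℝ} (hf : Differentiable ℝ f)
    (hf' : ∀ t, deriv f t = c) (t : ℝ) : f t = f 0 + c * t := by
  have hconst : ∀ x, deriv (fun x => f x - c * x) x = 0 := fun x => by
    rw [deriv_fun_sub (hf x) (by fun_prop), deriv_const_mul_field', deriv_id'', hf' x]
    ring
  have h : f t - c * t = f 0 - c * 0 :=
    is_const_of_deriv_eq_zero (hf.sub (by fun_prop)) hconst t 0
  linarith

/-- along any solution of the N = 1 peakon system of Example 2, the products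
p₁s₁ and r₁w₁ are constant, and q₁ is the affine function
`q₁(t) = q₁(0) + (2/27)(p₁(0)s₁(0) + r₁(0)w₁(0))·t`. -/
theorem peakon_example2_invariants (q₁ p₁ r₁ s₁ w₁ : ℝ → ℝ)
    (hq : Differentiable ℝ q₁) (hp : Differentiable ℝ p₁) (hr : Differentiable ℝ r₁)
    (hs : Differentiable ℝ s₁) (hw : Differentiable ℝ w₁)
    (heq : ∀ t : ℝ,
      deriv q₁ t = (2 / 27) * (p₁ t * s₁ t + r₁ t * w₁ t) ∧
      deriv p₁ t = (2 / 27) * p₁ t * (p₁ t * s₁ t + r₁ t * w₁ t) ∧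
      deriv r₁ t = (2 / 27) * r₁ t * (p₁ t * s₁ t + r₁ t * w₁ t) ∧
      deriv s₁ t = -(2 / 27) * s₁ t * (p₁ t * s₁ t + r₁ t * w₁ t) ∧
      deriv w₁ t = -(2 / 27) * w₁ t * (p₁ t * s₁ t + r₁ t * w₁ t)) :
    (∀ t : ℝ, p₁ t * s₁ t = p₁ 0 * s₁ 0) ∧
    (∀ t : ℝ, r₁ t * w₁ t = r₁ 0 * w₁ 0) ∧
    (∀ t : ℝ, q₁ t = q₁ 0 + (2 / 27) * (p₁ 0 * s₁ 0 + r₁ 0 * w₁ 0) * t) := by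
  set rate : ℝ → ℝ := fun t => (2 / 27) * (p₁ t * s₁ t + r₁ t * w₁ t)
  have hps (t : ℝ) : p₁ t * s₁ t = p₁ 0 * s₁ 0 :=
    mul_eq_of_deriv_eq_mul_of_deriv_eq_neg_mul (a := rate) hp hs
      (fun x => by rw [(heq x).2.1]; ring) (fun x => by rw [(heq x).2.2.2.1]; ring) t 0
  have hrw (t : ℝ) : r₁ t * w₁ t = r₁ 0 * w₁ 0 :=
    mul_eq_of_deriv_eq_mul_of_deriv_eq_neg_mul (a := rate) hr hw
      (fun x => by rw [(heq x).2.2.1]; ring) (fun x => by rw [(heq x).2.2.2.2]; ring) t 0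
  refine ⟨hps, hrw, eq_add_mul_of_deriv_eq_const hq fun t => ?_⟩
  rw [(heq t).1, hps t, hrw t]
end
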